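/- arXiv:math/0701795 — 8 statements merged into one kernel-verified Lean document; each statement's English description precedes it below -/
import Mathlib

section
/- Let g : ℝ^δ → ℝ be differentiable and bounded with bounded radial derivative, and let h(x) = -∑_{j=1}^δ x_j ∂g/∂x_j. For ε > 0 set g_ε(x) = ε^{-δ} g(x/ε). If μ is a finite Borel measure on ℝ^δ, then for every x and ε > 0, ∂/∂ε [(g_ε * μ)(x)] = ε^{-1}((h_ε * μ)(x) − δ (g_ε * μ)(x)). -/
/-!
Pointwise, the chain rule gives `∂/∂ε [ε^{-d} g(z/ε)] = ε⁻¹ (h_ε(z) - d g_ε(z))`, since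
`∂/∂ε (z/ε) = -ε⁻¹ (z/ε)` turns the derivative of `g` into its radial derivative. Bounded `g` and
bounded radial derivative make this `ε`-derivative uniformly bounded near any `ε ≠ 0`, so it can be
differentiated under the integral against the finite measure `μ`.
-/

open MeasureTheory Filter Real

noncomputable section

/-- Convolution of the rescaled kernel `g_ε(x) = ε^{-δ} g(x/ε)` against the measure `μ`. -/
def mconv (δ : ℕ) (g : EuclideanSpace ℝ (Fin δ) → ℝ) (ε : ℝ)
    (μ : Measure (EuclideanSpace ℝ (Fin δ))) (x : EuclideanSpace ℝ (Fin δ)) : ℝ :=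
  ∫ y, ε ^ (-(δ : ℝ)) * g (ε⁻¹ • (x - y)) ∂μ

/-- The negative of the radial derivative of `g`: `h(x) = -∑_j x_j ∂g/∂x_j`. -/
def negRad (δ : ℕ) (g : EuclideanSpace ℝ (Fin δ) → ℝ) (x : EuclideanSpace ℝ (Fin δ)) : ℝ :=
  -(fderiv ℝ g x x)

open scoped Topology

section Rescale

variable {E : Type*} [NormedAddCommGroup E] [NormedSpace ℝ E]

def rescale (d : ℝ) (g : E → ℝ) (e : ℝ) (z : E) : ℝ :=
  e ^ (-d) * g (e⁻¹ • z)

def negRadialDeriv (g : E → ℝ) (w : E) : ℝ :=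
  -(fderiv ℝ g w w)

theorem measurable_negRadialDeriv [FiniteDimensional ℝ E] [MeasurableSpace E] [BorelSpace E]
    (g : E → ℝ) : Measurable (negRadialDeriv g) :=
  (isBoundedBilinearMap_apply.continuous.measurable.comp
    ((measurable_fderiv ℝ g).prodMk measurable_id)).neg

theorem hasDerivAt_rescale {g : E → ℝ} {d e : ℝ} {z : E}
    (hg : DifferentiableAt ℝ g (e⁻¹ • z)) (he : e ≠ 0) :
    HasDerivAt (fun e => rescale d g e z)
      (e⁻¹ * (rescale d (negRadialDeriv g) e z - d * rescale d g e z)) e := by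
  have hpow : HasDerivAt (fun e : ℝ => e ^ (-d)) (-d * e ^ (-d - 1)) e :=
    hasDerivAt_rpow_const (Or.inl he)
  have hinv : HasDerivAt (fun e : ℝ => e⁻¹ • z) ((-e⁻¹) • e⁻¹ • z) e := by
    convert (hasDerivAt_inv he).smul_const z using 1
    rw [smul_smul]
    ring_nf
  have hcomp : HasDerivAt (fun e => g (e⁻¹ • z))
      (fderiv ℝ g (e⁻¹ • z) ((-e⁻¹) • e⁻¹ • z)) e :=
    hg.hasFDerivAt.comp_hasDerivAt e hinv
  refine (hpow.mul hcomp).congr_deriv ?_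
  rw [map_smul, smul_eq_mul, rpow_sub_one he]
  simp only [rescale, negRadialDeriv]
  ring

theorem abs_inv_mul_rescale_sub_le {g h : E → ℝ} {G H : ℝ} (hG : ∀ w, |g w| ≤ G)
    (hH : ∀ w, |h w| ≤ H) (d e : ℝ) (z : E) :
    |e⁻¹ * (rescale d h e z - d * rescale d g e z)| ≤ |e⁻¹ * e ^ (-d)| * (H + |d| * G) := by
  have hfactor : e⁻¹ * (rescale d h e z - d * rescale d g e z)
      = (e⁻¹ * e ^ (-d)) * (h (e⁻¹ • z) - d * g (e⁻¹ • z)) := by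
    simp only [rescale]
    ring
  rw [hfactor, abs_mul]
  gcongr
  calc |h (e⁻¹ • z) - d * g (e⁻¹ • z)| ≤ |h (e⁻¹ • z)| + |d| * |g (e⁻¹ • z)| := by
        rw [← abs_mul]
        exact abs_sub _ _
    _ ≤ H + |d| * G := by gcongr <;> simp only [hH, hG]

variable [MeasurableSpace E] [BorelSpace E] {μ : Measure E} [IsFiniteMeasure μ]

theorem integrable_rescale_comp_sub {g : E → ℝ} {G : ℝ} (hg : Measurable g)
    (hG : ∀ w, |g w| ≤ G) (d e : ℝ) (x : E) :
    Integrable (fun y => rescale d g e (x - y)) μ := by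
  refine (Integrable.of_bound ?_ G (ae_of_all _ fun y => hG _)).const_mul (e ^ (-d))
  exact (hg.comp ((continuous_const.sub continuous_id).const_smul e⁻¹).measurable)
    |>.aestronglyMeasurable

theorem hasDerivAt_integral_rescale_comp_sub [FiniteDimensional ℝ E] {g : E → ℝ} {G H : ℝ}
    (hg : Differentiable ℝ g) (hG : ∀ w, |g w| ≤ G) (hH : ∀ w, |negRadialDeriv g w| ≤ H)
    (d : ℝ) (x : E) {ε : ℝ} (hε : ε ≠ 0) :
    HasDerivAt (fun e => ∫ y, rescale d g e (x - y) ∂μ)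
      (ε⁻¹ * (∫ y, rescale d (negRadialDeriv g) ε (x - y) ∂μ
        - d * ∫ y, rescale d g ε (x - y) ∂μ)) ε := by
  set C := |ε⁻¹ * ε ^ (-d)| + 1
  have hnear : ∀ᶠ e in 𝓝 ε, e ≠ 0 ∧ |e⁻¹ * e ^ (-d)| < C := by
    have hcont : ContinuousAt (fun e : ℝ => |e⁻¹ * e ^ (-d)|) ε :=
      ((continuousAt_inv₀ hε).mul (continuousAt_rpow_const _ _ (Or.inl hε))).abs
    exact (eventually_ne_nhds hε).and (hcont.eventually (gt_mem_nhds (lt_add_one _)))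
  have hGH : 0 ≤ H + |d| * G :=
    add_nonneg ((abs_nonneg _).trans (hH 0))
      (mul_nonneg (abs_nonneg d) ((abs_nonneg _).trans (hG 0)))
  have hintg e := integrable_rescale_comp_sub (μ := μ) hg.continuous.measurable hG d e x
  have hinth := integrable_rescale_comp_sub (μ := μ) (measurable_negRadialDeriv g) hH d ε x
  have key := (hasDerivAt_integral_of_dominated_loc_of_deriv_le hnear
    (Eventually.of_forall fun e => (hintg e).aestronglyMeasurable) (hintg ε)
    ((hinth.sub ((hintg ε).const_mul d)).const_mul ε⁻¹).aestronglyMeasurable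
    (ae_of_all _ fun y e he => (abs_inv_mul_rescale_sub_le hG hH d e (x - y)).trans
      (mul_le_mul_of_nonneg_right he.2.le hGH))
    (integrable_const _)
    (ae_of_all _ fun y e he => hasDerivAt_rescale (hg _) he.1)).2
  rwa [integral_const_mul, integral_sub hinth ((hintg ε).const_mul d), integral_const_mul] at key

end Rescale

theorem stmt0 (δ : ℕ) (g : EuclideanSpace ℝ (Fin δ) → ℝ)
    (hdiff : Differentiable ℝ g)
    (hbd : ∃ G, ∀ x, |g x| ≤ G)
    (hradbd : ∃ H, ∀ x, |negRad δ g x| ≤ H)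
    (μ : Measure (EuclideanSpace ℝ (Fin δ))) [IsFiniteMeasure μ]
    (x : EuclideanSpace ℝ (Fin δ)) (ε : ℝ) (hε : 0 < ε) :
    HasDerivAt (fun e => mconv δ g e μ x)
      (ε⁻¹ * (mconv δ (negRad δ g) ε μ x - δ * mconv δ g ε μ x)) ε := by
  obtain ⟨G, hG⟩ := hbd
  obtain ⟨H, hH⟩ := hradbd
  exact hasDerivAt_integral_rescale_comp_sub hdiff hG hH δ x hε.ne'
end
end

section
/- Suppose 1 < q < ∞, g : ℝ^δ → ℝ is rapidly decreasing (Schwartz class) with g ≥ 0, and h, the negative of the radial derivative of g, satisfies h ≥ 0. If μ is a finite Borel measure on ℝ^δ with compact support, then d/dε ‖g_ε * μ‖_q = [∫_{ℝ^δ} (g_ε*μ)^{q−1}(h_ε*μ) dm] / (ε ‖g_ε*μ‖_q^{q−1}) − δ ‖g_ε*μ‖_q / ε, where m is Lebesgue measure. -/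
open MeasureTheory Filter Real

noncomputable section

/-- The `L^q` norm against Lebesgue measure. -/
def lqNorm (δ : ℕ) (q : ℝ) (f : EuclideanSpace ℝ (Fin δ) → ℝ) : ℝ :=
  (∫ x, f x ^ q) ^ (1 / q)

namespace Stmt1Aux

variable {δ : ℕ}

abbrev ES (δ : ℕ) := EuclideanSpace ℝ (Fin δ)

/-- The negative radial derivative of a Schwartz function, as a Schwartz function. -/
def HS (f : SchwartzMap (ES δ) ℝ) : SchwartzMap (ES δ) ℝ :=
  -(SchwartzMap.bilinLeftCLM (ContinuousLinearMap.id ℝ ((ES δ) →L[ℝ] ℝ))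
      (ContinuousLinearMap.id ℝ (ES δ)).hasTemperateGrowth (SchwartzMap.fderivCLM ℝ (ES δ) ℝ f))

lemma HS_apply (f : SchwartzMap (ES δ) ℝ) (x : (ES δ)) : HS f x = negRad δ (⇑f) x := by
  simp [HS, SchwartzMap.bilinLeftCLM, SchwartzMap.mkCLM, SchwartzMap.fderivCLM_apply, negRad]
  rfl

lemma coe_HS (f : SchwartzMap (ES δ) ℝ) : ⇑(HS f) = negRad δ (⇑f) := funext (HS_apply f)

/-- Polynomial decay of a Schwartz function, rpow form. -/
lemma schwartz_decay (f : SchwartzMap (ES δ) ℝ) (m : ℕ) :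
    ∃ C : ℝ, 0 ≤ C ∧ ∀ x : ES δ, ‖f x‖ ≤ C * (1 + ‖x‖) ^ (-(m : ℝ)) := by
  refine ⟨2 ^ m * ((Finset.Iic (m, 0)).sup fun p => SchwartzMap.seminorm ℝ p.1 p.2) f, ?_, ?_⟩
  · positivity
  · intro x
    have h := SchwartzMap.one_add_le_sup_seminorm_apply (𝕜 := ℝ) (m := (m, 0))
      (le_refl m) (le_refl 0) f x
    rw [norm_iteratedFDeriv_zero] at h
    have hx : (0:ℝ) < 1 + ‖x‖ := by positivity
    rw [Real.rpow_neg hx.le, Real.rpow_natCast]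
    rw [mul_comm] at h
    have h3 := (le_div_iff₀ (by positivity : (0:ℝ) < (1 + ‖x‖) ^ m)).mpr h
    calc ‖f x‖ ≤ (2 ^ m * ((Finset.Iic (m, 0)).sup fun p => SchwartzMap.seminorm ℝ p.1 p.2) f)
          / (1 + ‖x‖) ^ m := h3
      _ = _ := by rw [div_eq_mul_inv]

variable {μ : Measure (ES δ)} [IsFiniteMeasure μ]

lemma integrable_of_bdd_cont {f : ES δ → ℝ} (hc : Continuous f) {C : ℝ} (hC : ∀ y, ‖f y‖ ≤ C) :
    Integrable f μ :=
  (integrable_const C).mono' hc.aestronglyMeasurable (Filter.Eventually.of_forall hC)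

lemma mconv_nonneg {f : ES δ → ℝ} (hf : ∀ x, 0 ≤ f x) {e : ℝ} (he : 0 ≤ e) (x : (ES δ)) :
    0 ≤ mconv δ f e μ x :=
  integral_nonneg fun y => mul_nonneg (Real.rpow_nonneg he _) (hf _)

lemma mconv_continuous {f : ES δ → ℝ} (hc : Continuous f) {C : ℝ} (hC : ∀ y, ‖f y‖ ≤ C)
    (e : ℝ) : Continuous (mconv δ f e μ) := by
  apply continuous_of_dominated (bound := fun _ => |e ^ (-(δ : ℝ))| * C)
  · intro x
    exact (continuous_const.mul
      (hc.comp ((continuous_const.sub continuous_id).const_smul e⁻¹))).aestronglyMeasurable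
  · intro x
    refine Eventually.of_forall fun y => ?_
    rw [norm_mul]
    exact mul_le_mul_of_nonneg_left (hC _) (norm_nonneg _)
  · exact integrable_const _
  · refine Eventually.of_forall fun y => ?_
    exact continuous_const.mul
      (hc.comp ((continuous_id.sub continuous_const).const_smul e⁻¹))

/-- Uniform decay bound for the mollification, for `e` in a compact positive interval. -/
lemma mconv_bound (f : SchwartzMap (ES δ) ℝ) {K : Set (ES δ)} (hK : μ Kᶜ = 0) {R : ℝ}
    (hR0 : 0 ≤ R) (hR : ∀ y ∈ K, ‖y‖ ≤ R) (m : ℕ) {a b : ℝ} (ha : 0 < a) :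
    ∃ C : ℝ, 0 ≤ C ∧ ∀ e ∈ Set.Icc a b, ∀ x : ES δ,
      ‖mconv δ (⇑f) e μ x‖ ≤ C * (1 + ‖x‖) ^ (-(m : ℝ)) := by
  obtain ⟨D, hD0, hDf⟩ := schwartz_decay f m
  set M : ℝ := ((1 + R) * (1 + |b|)) ^ m with hM
  have hM0 : 0 ≤ M := by positivity
  refine ⟨a ^ (-(δ : ℝ)) * D * M * (μ Set.univ).toReal, by positivity, ?_⟩
  rintro e ⟨hae, heb⟩ x
  have he : 0 < e := lt_of_lt_of_le ha hae
  have hmemK : ∀ᵐ y ∂μ, y ∈ K := by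
    rw [ae_iff]; simpa [← Set.compl_def] using hK
  have hx1 : (0:ℝ) < 1 + ‖x‖ := by positivity
  have key : ∀ᵐ y ∂μ, ‖e ^ (-(δ : ℝ)) * f (e⁻¹ • (x - y))‖ ≤
      a ^ (-(δ : ℝ)) * D * M * (1 + ‖x‖) ^ (-(m : ℝ)) := by
    filter_upwards [hmemK] with y hy
    set z : ES δ := e⁻¹ • (x - y) with hz
    have hxz : ‖x‖ ≤ R + |b| * ‖z‖ := by
      have hez : x - y = e • z := by
        rw [hz, smul_smul, mul_inv_cancel₀ he.ne', one_smul]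
      have h1 : ‖x‖ ≤ ‖y‖ + ‖x - y‖ := by
        have := norm_add_le y (x - y); simpa using this
      have h2 : ‖x - y‖ = e * ‖z‖ := by
        rw [hez, norm_smul, Real.norm_eq_abs, abs_of_pos he]
      have h3 : e * ‖z‖ ≤ |b| * ‖z‖ :=
        mul_le_mul_of_nonneg_right (heb.trans (le_abs_self b)) (norm_nonneg z)
      linarith [hR y hy]
    have hz1 : (0:ℝ) < 1 + ‖z‖ := by positivity
    have h1 : 1 + ‖x‖ ≤ (1 + R) * (1 + |b|) * (1 + ‖z‖) := by
      nlinarith [norm_nonneg z, abs_nonneg b, mul_nonneg hR0 (abs_nonneg b),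
        mul_nonneg hR0 (norm_nonneg z), mul_nonneg (abs_nonneg b) (norm_nonneg z),
        mul_nonneg (mul_nonneg hR0 (abs_nonneg b)) (norm_nonneg z)]
    have hpow : (1 + ‖x‖) ^ m ≤ M * (1 + ‖z‖) ^ m := by
      calc (1 + ‖x‖) ^ m ≤ ((1 + R) * (1 + |b|) * (1 + ‖z‖)) ^ m :=
            pow_le_pow_left₀ hx1.le h1 m
        _ = M * (1 + ‖z‖) ^ m := by rw [mul_pow]
    have hrho : (1 + ‖z‖) ^ (-(m : ℝ)) ≤ M * (1 + ‖x‖) ^ (-(m : ℝ)) := by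
      rw [Real.rpow_neg hz1.le, Real.rpow_neg hx1.le, Real.rpow_natCast, Real.rpow_natCast]
      rw [← one_div, mul_comm M, inv_mul_eq_div, div_le_div_iff₀ (by positivity) (by positivity)]
      calc 1 * (1 + ‖x‖) ^ m = (1 + ‖x‖) ^ m := one_mul _
        _ ≤ M * (1 + ‖z‖) ^ m := hpow
    have hea : e ^ (-(δ : ℝ)) ≤ a ^ (-(δ : ℝ)) :=
      Real.rpow_le_rpow_of_nonpos ha hae (by simp)
    have hfz : ‖f z‖ ≤ D * (M * (1 + ‖x‖) ^ (-(m : ℝ))) :=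
      (hDf z).trans (mul_le_mul_of_nonneg_left hrho hD0)
    calc ‖e ^ (-(δ : ℝ)) * f z‖ = e ^ (-(δ : ℝ)) * ‖f z‖ := by
          rw [norm_mul, Real.norm_eq_abs, abs_of_nonneg (Real.rpow_nonneg he.le _)]
      _ ≤ a ^ (-(δ : ℝ)) * (D * (M * (1 + ‖x‖) ^ (-(m : ℝ)))) :=
          mul_le_mul hea hfz (norm_nonneg _) (Real.rpow_nonneg ha.le _)
      _ = a ^ (-(δ : ℝ)) * D * M * (1 + ‖x‖) ^ (-(m : ℝ)) := by ring
  have := norm_integral_le_of_norm_le_const (μ := μ) key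
  calc ‖mconv δ (⇑f) e μ x‖ ≤
      a ^ (-(δ : ℝ)) * D * M * (1 + ‖x‖) ^ (-(m : ℝ)) * (μ Set.univ).toReal := this
    _ = a ^ (-(δ : ℝ)) * D * M * (μ Set.univ).toReal * (1 + ‖x‖) ^ (-(m : ℝ)) := by ring


lemma schwartz_bdd (f : SchwartzMap (ES δ) ℝ) : ∃ C : ℝ, 0 ≤ C ∧ ∀ x : ES δ, ‖f x‖ ≤ C := by
  obtain ⟨C, h0, h⟩ := schwartz_decay f 0
  exact ⟨C, h0, fun x => by simpa using h x⟩

lemma negRad_bdd (f : SchwartzMap (ES δ) ℝ) :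
    ∃ C : ℝ, 0 ≤ C ∧ ∀ x : ES δ, ‖negRad δ (⇑f) x‖ ≤ C := by
  rw [← coe_HS]; exact schwartz_bdd (HS f)

lemma negRad_cont (f : SchwartzMap (ES δ) ℝ) : Continuous (negRad δ (⇑f)) := by
  rw [← coe_HS]; exact (HS f).continuous

lemma f_bdd (f : SchwartzMap (ES δ) ℝ) : ∃ C : ℝ, 0 ≤ C ∧ ∀ x : ES δ, ‖f x‖ ≤ C :=
  schwartz_bdd f

/-- Pointwise (in `x`) derivative of the mollification with respect to `e`. -/
lemma mconv_hasDerivAt (f : SchwartzMap (ES δ) ℝ) {e : ℝ} (he : 0 < e) (x : ES δ) :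
    HasDerivAt (fun t => mconv δ (⇑f) t μ x)
      ((mconv δ (negRad δ (⇑f)) e μ x - δ * mconv δ (⇑f) e μ x) / e) e := by
  obtain ⟨Cg, hCg0, hCg⟩ := f_bdd f
  obtain ⟨Ch, hCh0, hCh⟩ := negRad_bdd f
  have hhalf : (0:ℝ) < e / 2 := half_pos he
  -- positivity on the ball
  have hball : ∀ t ∈ Metric.ball e (e / 2), e / 2 < t := by
    intro t ht
    rw [Metric.mem_ball, Real.dist_eq, abs_lt] at ht
    linarith [ht.1]
  set F' : ℝ → ES δ → ℝ := fun t y =>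
    (t ^ (-(δ : ℝ)) * negRad δ (⇑f) (t⁻¹ • (x - y)) -
      δ * (t ^ (-(δ : ℝ)) * f (t⁻¹ • (x - y)))) / t with hF'
  have cont_cf : ∀ t : ℝ, Continuous fun y : ES δ => t ^ (-(δ : ℝ)) * f (t⁻¹ • (x - y)) :=
    fun t => continuous_const.mul
      (f.continuous.comp ((continuous_const.sub continuous_id).const_smul t⁻¹))
  have cont_ch : ∀ t : ℝ, Continuous fun y : ES δ => t ^ (-(δ : ℝ)) * negRad δ (⇑f) (t⁻¹ • (x - y)) :=
    fun t => continuous_const.mul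
      ((negRad_cont f).comp ((continuous_const.sub continuous_id).const_smul t⁻¹))
  have key := hasDerivAt_integral_of_dominated_loc_of_deriv_le (μ := μ)
    (F := fun t y => t ^ (-(δ : ℝ)) * f (t⁻¹ • (x - y))) (F' := F') (x₀ := e)
    (bound := fun _ => ((e/2) ^ (-(δ : ℝ)) * Ch + δ * ((e/2) ^ (-(δ : ℝ)) * Cg)) / (e/2))
    (Metric.ball_mem_nhds e hhalf)
    (Eventually.of_forall fun t => (cont_cf t).aestronglyMeasurable)
    (integrable_of_bdd_cont (cont_cf e) (C := |e ^ (-(δ:ℝ))| * Cg) (fun y => by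
      rw [norm_mul]
      exact mul_le_mul_of_nonneg_left (hCg _) (abs_nonneg _)))
    (((cont_ch e).sub (continuous_const.mul (cont_cf e))).div_const e).aestronglyMeasurable
    (Eventually.of_forall fun y => by
      intro t ht
      have ht0 : e / 2 < t := hball t ht
      have htpos : 0 < t := hhalf.trans ht0
      have htd : t ^ (-(δ:ℝ)) ≤ (e/2) ^ (-(δ:ℝ)) :=
        Real.rpow_le_rpow_of_nonpos hhalf ht0.le (by simp)
      have htd0 : 0 ≤ t ^ (-(δ:ℝ)) := Real.rpow_nonneg htpos.le _
      have hnum : ‖t ^ (-(δ : ℝ)) * negRad δ (⇑f) (t⁻¹ • (x - y)) -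
          δ * (t ^ (-(δ : ℝ)) * f (t⁻¹ • (x - y)))‖ ≤
          (e/2) ^ (-(δ : ℝ)) * Ch + δ * ((e/2) ^ (-(δ : ℝ)) * Cg) := by
        refine (norm_sub_le _ _).trans (add_le_add ?_ ?_)
        · rw [norm_mul, Real.norm_eq_abs, abs_of_nonneg htd0]
          exact mul_le_mul htd (hCh _) (norm_nonneg _) (Real.rpow_nonneg hhalf.le _)
        · rw [norm_mul, Real.norm_eq_abs, Nat.abs_cast, norm_mul, Real.norm_eq_abs,
            abs_of_nonneg htd0]
          exact mul_le_mul_of_nonneg_left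
            (mul_le_mul htd (hCg _) (norm_nonneg _) (Real.rpow_nonneg hhalf.le _))
            (Nat.cast_nonneg δ)
      rw [hF', norm_div, show ‖t‖ = t by rw [Real.norm_eq_abs, abs_of_pos htpos]]
      exact div_le_div₀ (by positivity) hnum hhalf ht0.le)
    (integrable_const _)
    (Eventually.of_forall fun y => by
      intro t ht
      have htpos : 0 < t := hhalf.trans (hball t ht)
      set z : ES δ := t⁻¹ • (x - y) with hzdef
      have hA : HasDerivAt (fun s : ℝ => s ^ (-(δ : ℝ))) (-(δ:ℝ) * t ^ (-(δ:ℝ) - 1)) t :=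
        Real.hasDerivAt_rpow_const (Or.inl htpos.ne')
      have hI : HasDerivAt (fun s : ℝ => s⁻¹ • (x - y)) (-(t^2)⁻¹ • (x - y)) t :=
        (hasDerivAt_inv htpos.ne').smul_const (x - y)
      have hB : HasDerivAt (fun s : ℝ => f (s⁻¹ • (x - y)))
          ((fderiv ℝ (⇑f) z) (-(t^2)⁻¹ • (x - y))) t :=
        (f.differentiable.differentiableAt.hasFDerivAt).comp_hasDerivAt t hI
      have hAB := hA.mul hB
      refine hAB.congr_deriv ?_
      have hxy : x - y = t • z := by
        rw [hzdef, smul_smul, mul_inv_cancel₀ htpos.ne', one_smul]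
      have harg : (-(t^2)⁻¹ • (x - y)) = (-t⁻¹) • z := by
        rw [hxy, smul_smul]
        congr 1
        field_simp
      have hfd : (fderiv ℝ (⇑f) z) (-(t^2)⁻¹ • (x - y)) = t⁻¹ * negRad δ (⇑f) z := by
        rw [harg, ContinuousLinearMap.map_smul, negRad]
        simp [smul_eq_mul]
      have hts : t ^ (-(δ:ℝ) - 1) = t ^ (-(δ:ℝ)) * t⁻¹ := by
        rw [Real.rpow_sub htpos, Real.rpow_one, div_eq_mul_inv]
      rw [hF', hfd, hts]
      simp only [hzdef]
      field_simp
      ring)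
  -- now rewrite the conclusion
  have h2 := key.2
  have intA : Integrable (fun y => e ^ (-(δ:ℝ)) * negRad δ (⇑f) (e⁻¹ • (x - y))) μ :=
    integrable_of_bdd_cont (cont_ch e) (C := |e ^ (-(δ:ℝ))| * Ch) (fun y => by
      rw [norm_mul]; exact mul_le_mul_of_nonneg_left (hCh _) (abs_nonneg _))
  have intB : Integrable (fun y => e ^ (-(δ:ℝ)) * f (e⁻¹ • (x - y))) μ :=
    integrable_of_bdd_cont (cont_cf e) (C := |e ^ (-(δ:ℝ))| * Cg) (fun y => by
      rw [norm_mul]; exact mul_le_mul_of_nonneg_left (hCg _) (abs_nonneg _))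
  have : (∫ y, F' e y ∂μ) =
      (mconv δ (negRad δ (⇑f)) e μ x - δ * mconv δ (⇑f) e μ x) / e := by
    rw [hF']
    simp only [div_eq_mul_inv]
    rw [integral_mul_const, mconv, mconv]
    congr 1
    rw [integral_sub intA (intB.const_mul _)]
    simp only [integral_const_mul]
  rwa [this] at h2

end Stmt1Aux

open Stmt1Aux in
theorem stmt1 (δ : ℕ) (q : ℝ) (hq : 1 < q) (g : EuclideanSpace ℝ (Fin δ) → ℝ)
    (hsm : ContDiff ℝ (⊤ : ℕ∞) g)
    (hdecay : ∀ k n : ℕ, ∃ C, ∀ x, ‖x‖ ^ k * ‖iteratedFDeriv ℝ n g x‖ ≤ C)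
    (hg : ∀ x, 0 ≤ g x) (hh : ∀ x, 0 ≤ negRad δ g x)
    (μ : Measure (EuclideanSpace ℝ (Fin δ))) [IsFiniteMeasure μ]
    (hcs : ∃ K : Set (EuclideanSpace ℝ (Fin δ)), IsCompact K ∧ μ Kᶜ = 0)
    (ε : ℝ) (hε : 0 < ε) :
    HasDerivAt (fun e => lqNorm δ q (mconv δ g e μ))
      ((∫ x, (mconv δ g ε μ x) ^ (q - 1) * mconv δ (negRad δ g) ε μ x) /
          (ε * (lqNorm δ q (mconv δ g ε μ)) ^ (q - 1)) -
        δ * lqNorm δ q (mconv δ g ε μ) / ε) ε := by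
  classical
  obtain ⟨K, hKc, hK0⟩ := hcs
  set G : SchwartzMap (ES δ) ℝ := ⟨g, hsm.of_le (by simp), hdecay⟩ with hGdef
  have hGg : ⇑G = g := rfl
  have hHg : ⇑(HS G) = negRad δ g := coe_HS G
  -- bounding radius for the support
  obtain ⟨R₀, hR₀⟩ := hKc.isBounded.exists_norm_le
  set R : ℝ := max R₀ 0 with hRdef
  have hR0 : 0 ≤ R := le_max_right _ _
  have hRK : ∀ y ∈ K, ‖y‖ ≤ R := fun y hy => (hR₀ y hy).trans (le_max_left _ _)
  -- basic q facts
  have hq0 : (0:ℝ) < q := lt_trans one_pos hq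
  have hq1 : (0:ℝ) < q - 1 := sub_pos.2 hq
  set m : ℕ := δ + 1 with hmdef
  have hhalf : (0:ℝ) < ε / 2 := half_pos hε
  have hεIcc : ε ∈ Set.Icc (ε/2) (ε + ε/2) := ⟨by linarith, by linarith⟩
  have hballIcc : ∀ t ∈ Metric.ball ε (ε/2), t ∈ Set.Icc (ε/2) (ε + ε/2) := by
    intro t ht
    rw [Metric.mem_ball, Real.dist_eq, abs_lt] at ht
    exact ⟨by linarith [ht.1], by linarith [ht.2]⟩
  have hballpos : ∀ t ∈ Metric.ball ε (ε/2), 0 < t := fun t ht =>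
    lt_of_lt_of_le hhalf (hballIcc t ht).1
  -- decay bounds
  obtain ⟨Cg, hCg0, hCgB⟩ := mconv_bound (μ := μ) G hK0 hR0 hRK m (half_pos hε) (b := ε + ε/2)
  obtain ⟨Ch, hCh0, hChB⟩ := mconv_bound (μ := μ) (HS G) hK0 hR0 hRK m (half_pos hε) (b := ε + ε/2)
  rw [hHg] at hChB
  rw [hGg] at hCgB
  -- continuity and sign
  obtain ⟨Cb, hCb0, hCb⟩ := schwartz_bdd G
  rw [hGg] at hCb
  obtain ⟨Cbh, hCbh0, hCbh⟩ := negRad_bdd G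
  have hu_cont : ∀ e : ℝ, Continuous (mconv δ g e μ) := fun e =>
    mconv_continuous hsm.continuous hCb e
  have hw_cont : ∀ e : ℝ, Continuous (mconv δ (negRad δ g) e μ) := fun e =>
    mconv_continuous (negRad_cont G) hCbh e
  have hu_nn : ∀ {e : ℝ}, 0 ≤ e → ∀ x, 0 ≤ mconv δ g e μ x := fun he x =>
    mconv_nonneg hg he x
  have hw_nn : ∀ {e : ℝ}, 0 ≤ e → ∀ x, 0 ≤ mconv δ (negRad δ g) e μ x := fun he x =>
    mconv_nonneg hh he x
  have hrho_pos : ∀ x : ES δ, (0:ℝ) < (1 + ‖x‖) ^ (-(m:ℝ)) := fun x =>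
    Real.rpow_pos_of_pos (by positivity) _
  have hcont_rpow : ∀ r : ℝ, 0 < r → Continuous fun t : ℝ => t ^ r := fun r hr =>
    continuous_iff_continuousAt.2 fun t => Real.continuousAt_rpow_const t r (Or.inr hr.le)
  -- integrability of the dominating profile
  have hJq : Integrable (fun x : ES δ => ((1 + ‖x‖) ^ (-(m:ℝ))) ^ q) := by
    have hmq : (Module.finrank ℝ (ES δ) : ℝ) < (m:ℝ) * q := by
      rw [finrank_euclideanSpace_fin, hmdef]
      push_cast
      nlinarith
    have h := integrable_one_add_norm (E := ES δ) (μ := volume) (r := (m:ℝ) * q) hmq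
    have heq : ∀ x : ES δ, ((1 + ‖x‖ : ℝ) ^ (-(m:ℝ))) ^ q = (1 + ‖x‖) ^ (-((m:ℝ) * q)) :=
      fun x => by
        rw [show -((m:ℝ)*q) = (-(m:ℝ))*q by ring, Real.rpow_mul (by positivity : (0:ℝ) ≤ 1 + ‖x‖)]
    simpa only [heq] using h
  have hrho_mul : ∀ x : ES δ,
      ((1 + ‖x‖) ^ (-(m:ℝ))) ^ (q - 1) * ((1 + ‖x‖) ^ (-(m:ℝ))) = ((1 + ‖x‖) ^ (-(m:ℝ))) ^ q := by
    intro x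
    calc ((1 + ‖x‖) ^ (-(m:ℝ))) ^ (q - 1) * ((1 + ‖x‖) ^ (-(m:ℝ)))
        = ((1 + ‖x‖) ^ (-(m:ℝ))) ^ (q - 1) * ((1 + ‖x‖) ^ (-(m:ℝ))) ^ (1:ℝ) := by
          rw [Real.rpow_one]
      _ = ((1 + ‖x‖) ^ (-(m:ℝ))) ^ (q - 1 + 1) := (Real.rpow_add (hrho_pos x) _ _).symm
      _ = ((1 + ‖x‖) ^ (-(m:ℝ))) ^ q := by norm_num
  -- integrability of the integrands at ε
  have huB : ∀ x, ‖mconv δ g ε μ x‖ ≤ Cg * (1 + ‖x‖) ^ (-(m:ℝ)) := hCgB ε hεIcc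
  have hwB : ∀ x, ‖mconv δ (negRad δ g) ε μ x‖ ≤ Ch * (1 + ‖x‖) ^ (-(m:ℝ)) := hChB ε hεIcc
  have Int_uq : Integrable (fun x => mconv δ g ε μ x ^ q) := by
    refine (hJq.const_mul (Cg ^ q)).mono'
      ((hcont_rpow q hq0).comp (hu_cont ε)).aestronglyMeasurable ?_
    refine Eventually.of_forall fun x => ?_
    rw [Real.norm_eq_abs, abs_of_nonneg (Real.rpow_nonneg (hu_nn hε.le x) q)]
    calc mconv δ g ε μ x ^ q ≤ (Cg * (1 + ‖x‖) ^ (-(m:ℝ))) ^ q :=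
          Real.rpow_le_rpow (hu_nn hε.le x) ((le_abs_self _).trans (huB x)) hq0.le
      _ = Cg ^ q * ((1 + ‖x‖) ^ (-(m:ℝ))) ^ q :=
          Real.mul_rpow hCg0 (hrho_pos x).le
  have Int_uq1w : Integrable (fun x => mconv δ g ε μ x ^ (q-1) * mconv δ (negRad δ g) ε μ x) := by
    refine (hJq.const_mul (Cg ^ (q-1) * Ch)).mono'
      ((((hcont_rpow (q-1) hq1).comp (hu_cont ε))).mul (hw_cont ε)).aestronglyMeasurable ?_
    refine Eventually.of_forall fun x => ?_
    rw [norm_mul, Real.norm_eq_abs, abs_of_nonneg (Real.rpow_nonneg (hu_nn hε.le x) (q-1))]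
    calc mconv δ g ε μ x ^ (q-1) * ‖mconv δ (negRad δ g) ε μ x‖ ≤
        (Cg * (1 + ‖x‖) ^ (-(m:ℝ))) ^ (q-1) * (Ch * (1 + ‖x‖) ^ (-(m:ℝ))) := by
          refine mul_le_mul ?_ (hwB x) (norm_nonneg _) (Real.rpow_nonneg (by positivity) _)
          exact Real.rpow_le_rpow (hu_nn hε.le x) ((le_abs_self _).trans (huB x)) hq1.le
      _ = Cg ^ (q-1) * Ch * (((1 + ‖x‖) ^ (-(m:ℝ))) ^ (q-1) * ((1 + ‖x‖) ^ (-(m:ℝ)))) := by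
          rw [Real.mul_rpow hCg0 (hrho_pos x).le]; ring
      _ = Cg ^ (q-1) * Ch * ((1 + ‖x‖) ^ (-(m:ℝ))) ^ q := by rw [hrho_mul x]
  -- derivative of Fq under the integral sign
  set Fq : ℝ → ℝ := fun e => ∫ x, mconv δ g e μ x ^ q with hFqdef
  have hFq : HasDerivAt Fq (∫ x, ((mconv δ (negRad δ g) ε μ x - δ * mconv δ g ε μ x) / ε) * q *
      mconv δ g ε μ x ^ (q-1)) ε := by
    have key := hasDerivAt_integral_of_dominated_loc_of_deriv_le (μ := (volume : Measure (ES δ)))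
      (F := fun t x => mconv δ g t μ x ^ q)
      (F' := fun t x => ((mconv δ (negRad δ g) t μ x - δ * mconv δ g t μ x) / t) * q *
        mconv δ g t μ x ^ (q-1))
      (x₀ := ε)
      (bound := fun x => ((Ch + δ * Cg) / (ε/2) * q * Cg ^ (q-1)) * ((1 + ‖x‖) ^ (-(m:ℝ))) ^ q)
      (Metric.ball_mem_nhds ε hhalf)
      (Eventually.of_forall fun t =>
        ((hcont_rpow q hq0).comp (hu_cont t)).aestronglyMeasurable)
      Int_uq
      (((((hw_cont ε).sub (continuous_const.mul (hu_cont ε))).div_const ε).mul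
        continuous_const).mul
        ((hcont_rpow (q-1) hq1).comp (hu_cont ε))).aestronglyMeasurable
      (Eventually.of_forall fun x => ?_)
      (hJq.const_mul _)
      (Eventually.of_forall fun x => ?_)
    · exact key.2
    · -- the bound
      intro t ht
      have ht2 : ε/2 ≤ t := (hballIcc t ht).1
      have htpos : 0 < t := hballpos t ht
      have htIcc := hballIcc t ht
      have hub := hCgB t htIcc
      have hwb := hChB t htIcc
      have habs : |mconv δ (negRad δ g) t μ x - δ * mconv δ g t μ x| ≤
          (Ch + δ * Cg) * (1 + ‖x‖) ^ (-(m:ℝ)) := by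
        refine (abs_sub _ _).trans ?_
        rw [abs_mul, Nat.abs_cast]
        calc |mconv δ (negRad δ g) t μ x| + δ * |mconv δ g t μ x| ≤
            Ch * (1 + ‖x‖) ^ (-(m:ℝ)) + δ * (Cg * (1 + ‖x‖) ^ (-(m:ℝ))) := by
              refine add_le_add (hwb x) (mul_le_mul_of_nonneg_left (hub x) (Nat.cast_nonneg δ))
          _ = (Ch + δ * Cg) * (1 + ‖x‖) ^ (-(m:ℝ)) := by ring
      have hupow : mconv δ g t μ x ^ (q-1) ≤ Cg ^ (q-1) * ((1 + ‖x‖) ^ (-(m:ℝ))) ^ (q-1) := by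
        rw [← Real.mul_rpow hCg0 (hrho_pos x).le]
        exact Real.rpow_le_rpow (hu_nn htpos.le x) ((le_abs_self _).trans (hub x)) hq1.le
      calc ‖(mconv δ (negRad δ g) t μ x - δ * mconv δ g t μ x) / t * q *
            mconv δ g t μ x ^ (q-1)‖ =
          |mconv δ (negRad δ g) t μ x - δ * mconv δ g t μ x| / t * q *
            mconv δ g t μ x ^ (q-1) := by
            rw [norm_mul, norm_mul, norm_div, Real.norm_eq_abs, Real.norm_eq_abs,
              Real.norm_eq_abs, Real.norm_eq_abs, abs_of_pos htpos, abs_of_pos hq0,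
              abs_of_nonneg (Real.rpow_nonneg (hu_nn htpos.le x) _)]
        _ ≤ ((Ch + δ * Cg) * (1 + ‖x‖) ^ (-(m:ℝ))) / (ε/2) * q *
            (Cg ^ (q-1) * ((1 + ‖x‖) ^ (-(m:ℝ))) ^ (q-1)) := by
            refine mul_le_mul (mul_le_mul_of_nonneg_right
              (div_le_div₀ (by positivity) habs hhalf ht2) hq0.le) hupow
              (Real.rpow_nonneg (hu_nn htpos.le x) _) (by positivity)
        _ = ((Ch + δ * Cg) / (ε/2) * q * Cg ^ (q-1)) *
            (((1 + ‖x‖) ^ (-(m:ℝ))) ^ (q-1) * ((1 + ‖x‖) ^ (-(m:ℝ)))) := by ring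
        _ = ((Ch + δ * Cg) / (ε/2) * q * Cg ^ (q-1)) * ((1 + ‖x‖) ^ (-(m:ℝ))) ^ q := by
            rw [hrho_mul x]
    · -- the derivative
      intro t ht
      have htpos : 0 < t := hballpos t ht
      have hd := mconv_hasDerivAt (μ := μ) G htpos x
      rw [hGg] at hd
      have := hd.rpow_const (p := q) (Or.inr hq.le)
      exact this
  -- split the derivative integral
  set A : ℝ := ∫ x, mconv δ g ε μ x ^ (q - 1) * mconv δ (negRad δ g) ε μ x with hAdef
  have hpow_u : ∀ x, mconv δ g ε μ x ^ (q-1) * mconv δ g ε μ x = mconv δ g ε μ x ^ q := by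
    intro x
    rcases eq_or_lt_of_le (hu_nn hε.le x) with h | h
    · rw [← h, Real.zero_rpow (by linarith : q - 1 ≠ 0), Real.zero_rpow hq0.ne', zero_mul]
    · calc mconv δ g ε μ x ^ (q-1) * mconv δ g ε μ x
          = mconv δ g ε μ x ^ (q-1) * mconv δ g ε μ x ^ (1:ℝ) := by rw [Real.rpow_one]
        _ = mconv δ g ε μ x ^ (q - 1 + 1) := (Real.rpow_add h _ _).symm
        _ = mconv δ g ε μ x ^ q := by norm_num
  have hD0 : (∫ x, ((mconv δ (negRad δ g) ε μ x - δ * mconv δ g ε μ x) / ε) * q *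
      mconv δ g ε μ x ^ (q-1)) = (q / ε) * (A - δ * Fq ε) := by
    have hptwise : ∀ x, ((mconv δ (negRad δ g) ε μ x - δ * mconv δ g ε μ x) / ε) * q *
        mconv δ g ε μ x ^ (q-1) = (q / ε) * (mconv δ g ε μ x ^ (q-1) *
          mconv δ (negRad δ g) ε μ x - δ * (mconv δ g ε μ x ^ q)) := by
      intro x
      rw [← hpow_u x]
      field_simp
    rw [integral_congr_ae (Eventually.of_forall hptwise), integral_const_mul,
      integral_sub Int_uq1w (Int_uq.const_mul _), integral_const_mul]
  rw [hD0] at hFq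
  -- case split on Fq ε = 0
  by_cases hF0 : Fq ε = 0
  · -- degenerate case : the function is identically zero
    have hae : (fun x => mconv δ g ε μ x ^ q) =ᵐ[volume] 0 :=
      (integral_eq_zero_iff_of_nonneg (fun x => Real.rpow_nonneg (hu_nn hε.le x) q) Int_uq).mp hF0
    have hae0 : mconv δ g ε μ =ᵐ[volume] (fun _ => (0:ℝ)) := by
      filter_upwards [hae] with x hx
      exact (Real.rpow_eq_zero (hu_nn hε.le x) hq0.ne').mp hx
    have huz : ∀ x, mconv δ g ε μ x = 0 := by
      have := (Continuous.ae_eq_iff_eq volume (hu_cont ε) continuous_const).mp hae0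
      exact fun x => congrFun this x
    -- either μ = 0 or g ≡ 0
    have hzero : ∀ (e : ℝ) (x : ES δ), mconv δ g e μ x = 0 := by
      by_cases hμ : μ = 0
      · intro e x; simp [mconv, hμ]
      · obtain ⟨D, hDc, hDd⟩ := TopologicalSpace.exists_countable_dense (ES δ)
        have hint : ∀ x : ES δ, Integrable (fun y => ε ^ (-(δ:ℝ)) * g (ε⁻¹ • (x - y))) μ :=
          fun x => integrable_of_bdd_cont (continuous_const.mul
            (hsm.continuous.comp ((continuous_const.sub continuous_id).const_smul ε⁻¹)))
            (C := |ε ^ (-(δ:ℝ))| * Cb) (fun y => by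
              rw [norm_mul]
              exact mul_le_mul_of_nonneg_left (hCb _) (abs_nonneg _))
        have haex : ∀ x : ES δ, ∀ᵐ y ∂μ, g (ε⁻¹ • (x - y)) = 0 := by
          intro x
          have h1 : (fun y => ε ^ (-(δ:ℝ)) * g (ε⁻¹ • (x - y))) =ᵐ[μ] 0 :=
            (integral_eq_zero_iff_of_nonneg
              (fun y => mul_nonneg (Real.rpow_nonneg hε.le _) (hg _)) (hint x)).mp (huz x)
          filter_upwards [h1] with y hy
          have hne : (0:ℝ) < ε ^ (-(δ:ℝ)) := Real.rpow_pos_of_pos hε _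
          have : ε ^ (-(δ:ℝ)) * g (ε⁻¹ • (x - y)) = 0 := hy
          rcases mul_eq_zero.mp this with h | h
          · exact absurd h hne.ne'
          · exact h
        have hall : ∀ᵐ y ∂μ, ∀ x ∈ D, g (ε⁻¹ • (x - y)) = 0 :=
          (ae_ball_iff hDc).mpr fun x _ => haex x
        have : (ae μ).NeBot := ae_neBot.mpr hμ
        obtain ⟨y₀, hy₀⟩ := hall.exists
        have hgz : ∀ z : ES δ, g z = 0 := by
          have hext : (fun x : ES δ => g (ε⁻¹ • (x - y₀))) = fun _ => (0:ℝ) :=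
            Continuous.ext_on hDd
              (hsm.continuous.comp ((continuous_id.sub continuous_const).const_smul ε⁻¹))
              continuous_const (fun x hx => hy₀ x hx)
          intro z
          have := congrFun hext (y₀ + ε • z)
          simpa [smul_smul, inv_mul_cancel₀ hε.ne'] using this
        intro e x
        simp [mconv, hgz]
    have hfun : (fun e => lqNorm δ q (mconv δ g e μ)) = fun _ => (0:ℝ) := by
      funext e
      simp [lqNorm, hzero e, Real.zero_rpow hq0.ne',
        Real.zero_rpow (inv_ne_zero hq0.ne')]
    have hlq0 : lqNorm δ q (mconv δ g ε μ) = 0 := congrFun hfun ε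
    have htv : (∫ x, (mconv δ g ε μ x) ^ (q - 1) * mconv δ (negRad δ g) ε μ x) /
          (ε * (lqNorm δ q (mconv δ g ε μ)) ^ (q - 1)) -
        δ * lqNorm δ q (mconv δ g ε μ) / ε = 0 := by
      rw [hlq0]
      have : ∀ x, (mconv δ g ε μ x) ^ (q - 1) * mconv δ (negRad δ g) ε μ x = 0 := by
        intro x
        rw [hzero ε x, Real.zero_rpow (by linarith : q - 1 ≠ 0), zero_mul]
      simp [this]
    rw [hfun, htv]
    exact hasDerivAt_const ε 0
  · -- main case
    have hFnn : 0 ≤ Fq ε := integral_nonneg fun x => Real.rpow_nonneg (hu_nn hε.le x) q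
    have hFpos : 0 < Fq ε := lt_of_le_of_ne hFnn (Ne.symm hF0)
    have hN := hFq.rpow_const (p := 1/q) (Or.inl hF0)
    have hshow : (fun e => lqNorm δ q (mconv δ g e μ)) = fun e => Fq e ^ (1/q) := rfl
    have hlq : lqNorm δ q (mconv δ g ε μ) = Fq ε ^ (1/q) := rfl
    rw [hshow, hlq]
    convert hN using 1
    set s : ℝ := Fq ε
    set N : ℝ := s ^ (1/q) with hNdef
    have hNpos : 0 < N := Real.rpow_pos_of_pos hFpos _
    have e1 : s ^ (1/q - 1) = N / s := by rw [hNdef, Real.rpow_sub hFpos, Real.rpow_one]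
    have e2 : N ^ (q-1) = s / N := by
      calc N ^ (q-1) = s ^ ((1/q) * (q-1)) := (Real.rpow_mul hFpos.le _ _).symm
        _ = s ^ (1 - 1/q) := by
            rw [show (1/q) * (q-1) = 1 - 1/q by field_simp]
        _ = s / N := by rw [Real.rpow_sub hFpos, Real.rpow_one]
    rw [e2, e1]
    field_simp


end
end

section
/- Let f : [1,∞) → (0,∞) be differentiable with |d/dx ln(f(e^x))| ≤ C for some finite constant C. If x_n is a nondecreasing sequence tending to ∞ with lim_{n→∞} ln(x_{n+1})/ln(x_n) = 1, then limsup_{n→∞} ln(f(x_n))/ln(x_n) = limsup_{x→∞} ln(f(x))/ln(x). -/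
open Filter Real

noncomputable section

set_option maxHeartbeats 1000000

theorem stmt5 (f : ℝ → ℝ) (C : ℝ)
    (hpos : ∀ x, 1 ≤ x → 0 < f x)
    (hdiff : ∀ x, 1 ≤ x → DifferentiableAt ℝ f x)
    (hlip : ∀ x : ℝ, 0 ≤ x → |deriv (fun t => Real.log (f (Real.exp t))) x| ≤ C)
    (x : ℕ → ℝ) (hx1 : ∀ n, 1 ≤ x n) (hmono : Monotone x)
    (htop : Tendsto x atTop atTop)
    (hslow : Tendsto (fun n => Real.log (x (n + 1)) / Real.log (x n)) atTop (nhds 1)) :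
    limsup (fun n => Real.log (f (x n)) / Real.log (x n)) atTop =
      limsup (fun t : ℝ => Real.log (f t) / Real.log t) atTop := by
  classical
  set g : ℝ → ℝ := fun t => Real.log (f (Real.exp t)) with hgdef
  have hC0 : (0 : ℝ) ≤ C := (abs_nonneg _).trans (hlip 0 le_rfl)
  -- differentiability of g on [0, ∞)
  have hgdiff : ∀ t ∈ Set.Ici (0 : ℝ), DifferentiableAt ℝ g t := by
    intro t ht
    have h1 : (1 : ℝ) ≤ Real.exp t := by
      have := Real.exp_le_exp.2 ht
      simpa using this
    have hne : f (Real.exp t) ≠ 0 := (hpos _ h1).ne'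
    exact (Real.differentiableAt_log hne).comp t
      ((hdiff _ h1).comp t (Real.differentiable_exp t))
  -- Lipschitz estimate for g on [0, ∞)
  have hLip : ∀ s ∈ Set.Ici (0 : ℝ), ∀ t ∈ Set.Ici (0 : ℝ), |g t - g s| ≤ C * |t - s| := by
    intro s hs t ht
    have := (convex_Ici (0 : ℝ)).norm_image_sub_le_of_norm_deriv_le hgdiff
      (fun y hy => by simpa [Real.norm_eq_abs] using hlip y hy) hs ht
    simpa [Real.norm_eq_abs] using this
  have habs : ∀ s : ℝ, 0 ≤ s → |g s| ≤ |g 0| + C * s := by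
    intro s hs
    have h0 := hLip 0 (Set.mem_Ici.2 le_rfl) s (Set.mem_Ici.2 hs)
    have : |g s - g 0| ≤ C * s := by
      simpa [abs_of_nonneg hs] using h0
    calc |g s| = |g s - g 0 + g 0| := by ring_nf
      _ ≤ |g s - g 0| + |g 0| := abs_add_le _ _
      _ ≤ |g 0| + C * s := by linarith
  set G : ℝ → ℝ := fun t => g t / t with hGdef
  set M : ℝ := |g 0| + C with hMdef
  have hM0 : 0 ≤ M := by positivity
  have hGM : ∀ t : ℝ, 1 ≤ t → |G t| ≤ M := by
    intro t ht
    have h0t : (0 : ℝ) < t := lt_of_lt_of_le one_pos ht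
    have h1 : |g t| ≤ M * t := by
      have := habs t h0t.le
      have h2 : |g 0| ≤ |g 0| * t := le_mul_of_one_le_right (abs_nonneg _) ht
      nlinarith
    have : |G t| = |g t| / t := by
      rw [hGdef]
      simp [abs_div, abs_of_pos h0t]
    rw [this, div_le_iff₀ h0t]
    linarith
  -- the sequence in log coordinates
  set u : ℕ → ℝ := fun n => Real.log (x n) with hudef
  have hu0 : ∀ n, 0 ≤ u n := fun n => Real.log_nonneg (hx1 n)
  have hxpos : ∀ n, (0 : ℝ) < x n := fun n => lt_of_lt_of_le one_pos (hx1 n)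
  have hutop : Tendsto u atTop atTop := Real.tendsto_log_atTop.comp htop
  have humono : Monotone u := fun a b hab => Real.log_le_log (hxpos a) (hmono hab)
  have hslow' : Tendsto (fun n => u (n + 1) / u n) atTop (nhds 1) := hslow
  -- rewrite the sequence limsup
  have hseqeq : (fun n => Real.log (f (x n)) / Real.log (x n)) = fun n => G (u n) := by
    funext n
    simp only [hGdef, hgdef, hudef, Real.exp_log (hxpos n)]
  -- rewrite the function limsup
  have hmaplog : map Real.log atTop = (atTop : Filter ℝ) := by
    conv_lhs => rw [← Real.map_exp_atTop]
    rw [Filter.map_map]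
    have hid : (Real.log ∘ Real.exp) = id := funext Real.log_exp
    rw [hid, Filter.map_id]
  have hfuneq : limsup (fun t : ℝ => Real.log (f t) / Real.log t) atTop = limsup G atTop := by
    have h1 : limsup (fun t : ℝ => Real.log (f t) / Real.log t) atTop
        = limsup (G ∘ Real.log) atTop := by
      apply limsup_congr
      filter_upwards [eventually_gt_atTop (0 : ℝ)] with t ht
      simp only [Function.comp, hGdef, hgdef, Real.exp_log ht]
    rw [h1, Filter.limsup_comp, hmaplog]
  rw [hseqeq, hfuneq]
  -- boundedness facts
  have hevfun : ∀ᶠ t : ℝ in atTop, |G t| ≤ M := by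
    filter_upwards [eventually_ge_atTop (1 : ℝ)] with t ht using hGM t ht
  have hevseq : ∀ᶠ n in atTop, |G (u n)| ≤ M := by
    filter_upwards [hutop.eventually (eventually_ge_atTop (1 : ℝ))] with n hn using hGM _ hn
  have hBfun : IsBoundedUnder (· ≤ ·) atTop G :=
    ⟨M, eventually_map.2 (by filter_upwards [hevfun] with t ht using (abs_le.1 ht).2)⟩
  have hBfun' : IsBoundedUnder (· ≥ ·) atTop G :=
    ⟨-M, eventually_map.2 (by filter_upwards [hevfun] with t ht using (abs_le.1 ht).1)⟩
  have hBseq : IsBoundedUnder (· ≤ ·) atTop (fun n => G (u n)) :=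
    ⟨M, eventually_map.2 (by filter_upwards [hevseq] with n hn using (abs_le.1 hn).2)⟩
  have hBseq' : IsBoundedUnder (· ≥ ·) atTop (fun n => G (u n)) :=
    ⟨-M, eventually_map.2 (by filter_upwards [hevseq] with n hn using (abs_le.1 hn).1)⟩
  set A : ℝ := limsup (fun n => G (u n)) atTop with hAdef
  set B : ℝ := limsup G atTop with hBdef
  -- A ≥ -M
  have hMA : -M ≤ A := by
    apply le_limsup_of_frequently_le _ hBseq
    exact ((hevseq.mono fun n hn => (abs_le.1 hn).1)).frequently
  -- direction A ≤ B
  have hAB : A ≤ B := by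
    apply le_of_forall_pos_le_add
    intro ε hε
    have hlt : ∀ᶠ t : ℝ in atTop, G t < B + ε :=
      eventually_lt_of_limsup_lt (lt_add_of_pos_right B hε) hBfun
    have hlt' : ∀ᶠ n in atTop, G (u n) < B + ε := hutop.eventually hlt
    exact limsup_le_of_le hBseq'.isCoboundedUnder_le (hlt'.mono fun n hn => hn.le)
  -- direction B ≤ A
  have hBA : B ≤ A := by
    apply le_of_forall_pos_le_add
    intro δ hδ
    set K : ℝ := 1 + |g 0| + 2 * C with hKdef
    have hK0 : 0 < K := by positivity
    set ε : ℝ := δ / K with hεdef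
    have hε : 0 < ε := div_pos hδ hK0
    have hKε : K * ε = δ := by
      rw [hεdef, mul_div_cancel₀ _ hK0.ne']
    have h1 : ∀ᶠ n in atTop, G (u n) < A + ε :=
      eventually_lt_of_limsup_lt (lt_add_of_pos_right A hε) hBseq
    have h2 : ∀ᶠ n in atTop, u (n + 1) / u n < 1 + ε :=
      hslow'.eventually (eventually_lt_nhds (lt_add_of_pos_right 1 hε))
    have h3 : ∀ᶠ n in atTop, (1 : ℝ) ≤ u n := hutop.eventually (eventually_ge_atTop 1)
    obtain ⟨N, hN⟩ := (h1.and (h2.and h3)).exists_forall_of_atTop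
    have key : ∀ t : ℝ, u N ≤ t → G t ≤ A + δ := by
      intro t ht
      have hNu : (1 : ℝ) ≤ u N := (hN N le_rfl).2.2
      have h1t : (1 : ℝ) ≤ t := le_trans hNu ht
      have h0t : (0 : ℝ) < t := lt_of_lt_of_le one_pos h1t
      have hexm : ∃ m, t < u m := (hutop.eventually (eventually_gt_atTop t)).exists
      set m0 : ℕ := Nat.find hexm with hm0def
      have hm0 : t < u m0 := Nat.find_spec hexm
      have hNm0 : N < m0 := by
        by_contra h
        push_neg at h
        exact absurd (lt_of_lt_of_le hm0 (humono h)) (not_lt.2 ht)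
      set n : ℕ := m0 - 1 with hndef
      have hnN : N ≤ n := by omega
      have hns : n + 1 = m0 := by omega
      have hunt : u n ≤ t := by
        have := Nat.find_min hexm (m := n) (by omega)
        linarith [not_lt.1 this]
      obtain ⟨hGn, hsucc, h1n⟩ := hN n hnN
      have h0n : (0 : ℝ) < u n := lt_of_lt_of_le one_pos h1n
      have hsucc' : u (n + 1) ≤ (1 + ε) * u n := by
        have := (div_lt_iff₀ h0n).1 hsucc
        linarith
      have hts : t - u n ≤ ε * u n := by
        have : t < u (n + 1) := by rw [hns]; exact hm0
        nlinarith
      have ha : g (u n) ≤ (A + ε) * u n := by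
        have : g (u n) / u n < A + ε := hGn
        have := (div_lt_iff₀ h0n).1 this
        linarith
      have hgt : g t ≤ g (u n) + C * (t - u n) := by
        have := hLip (u n) h0n.le t (le_trans h0n.le hunt)
        have h' := (abs_le.1 this).2
        rw [abs_of_nonneg (by linarith : (0:ℝ) ≤ t - u n)] at h'
        linarith
      -- main estimate
      have hkey2 : (C - A - ε) * (t - u n) ≤ (|g 0| + 2 * C) * (ε * t) := by
        rcases le_or_gt (C - A - ε) 0 with hc | hc
        · have h1' : (C - A - ε) * (t - u n) ≤ 0 :=
            mul_nonpos_of_nonpos_of_nonneg hc (by linarith)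
          have h2' : (0 : ℝ) ≤ (|g 0| + 2 * C) * (ε * t) := by positivity
          linarith
        · have hCA : C - A - ε ≤ |g 0| + 2 * C := by
            have : -M ≤ A := hMA
            rw [hMdef] at this
            linarith
          have hεt : ε * u n ≤ ε * t := by nlinarith
          calc (C - A - ε) * (t - u n) ≤ (|g 0| + 2 * C) * (t - u n) :=
                mul_le_mul_of_nonneg_right hCA (by linarith)
            _ ≤ (|g 0| + 2 * C) * (ε * u n) := by
                apply mul_le_mul_of_nonneg_left hts (by positivity)
            _ ≤ (|g 0| + 2 * C) * (ε * t) := by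
                apply mul_le_mul_of_nonneg_left hεt (by positivity)
      have hfinal : g t ≤ (A + K * ε) * t := by
        rw [hKdef]
        nlinarith [hkey2, ha, hgt]
      have : G t ≤ A + K * ε := by
        rw [hGdef]
        rw [div_le_iff₀ h0t]
        simpa using hfinal
      linarith [hKε, this]
    apply limsup_le_of_le hBfun'.isCoboundedUnder_le
    filter_upwards [eventually_ge_atTop (u N)] with t ht using key t ht
  linarith
end
end

section
/- Let f : [1,∞) → (0,∞) be differentiable with |d/dx ln(f(e^x))| ≤ C for some finite C, and let d̄(f) = limsup_{x→∞} ln(f(x))/ln(x). If d̄(f) > 0, then the set {t > 0 : for all α > 0, lim_{n→∞} |f(n^t) − f((n−1)^t)| / n^α = 0} equals the interval (0, d̄(f)^{-1}]. If d̄(f) = 0, this set equals (0,∞). -/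
/-!
The hypothesis makes `log f` a `C`-Lipschitz function of `log x` on `[1, ∞)`. Hence `f (n ^ t)`
and `f ((n - 1) ^ t)` differ by a factor `exp (O (t / n))`, so with `d̄ = upperOrder f` the
increment is `O (f (n ^ t) / n) = O (n ^ (t * (d̄ + ε) - 1))`, which is `o (n ^ α)` for every
`α > 0` as soon as `t * d̄ ≤ 1`. Conversely, if the increments are eventually at most `n ^ α`,
summing them gives `f (n ^ t) = O (n ^ (α + 1))`; the Lipschitz bound transfers this from the
points `n ^ t` to all large `x`, so `d̄ ≤ (α + 1) / t` for every `α > 0`.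
-/

open Filter Real Topology

noncomputable section

def upperOrder (f : ℝ → ℝ) : ℝ :=
  limsup (fun x => log (f x) / log x) atTop

def HasSubpolynomialIncrements (f : ℝ → ℝ) (t : ℝ) : Prop :=
  ∀ α : ℝ, 0 < α →
    Tendsto (fun n : ℕ => |f ((n : ℝ) ^ t) - f (((n : ℝ) - 1) ^ t)| / (n : ℝ) ^ α)
      atTop (𝓝 0)

theorem abs_sub_le_max_mul_abs_log_sub {a b : ℝ} (ha : 0 < a) (hb : 0 < b) :
    |b - a| ≤ max a b * |log b - log a| := by
  wlog hab : a ≤ b generalizing a b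
  · rw [abs_sub_comm, abs_sub_comm (log b), max_comm]
    exact this hb ha (le_of_not_ge hab)
  have hlog : log a - log b ≤ a / b - 1 := by
    rw [← log_div ha.ne' hb.ne']
    exact log_le_sub_one_of_pos (div_pos ha hb)
  rw [abs_of_nonneg (sub_nonneg.2 hab), abs_of_nonneg (sub_nonneg.2 (log_le_log ha hab)),
    max_eq_right hab]
  have hba : b * (a / b - 1) = a - b := by field_simp
  linarith [mul_le_mul_of_nonneg_left hlog hb.le]

theorem log_sub_log_sub_one_le {x : ℝ} (hx : 2 ≤ x) : log x - log (x - 1) ≤ 2 / x := by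
  have hx1 : x - 1 ≠ 0 := by linarith
  rw [← log_div (by positivity) hx1]
  calc log (x / (x - 1)) ≤ x / (x - 1) - 1 :=
        log_le_sub_one_of_pos (div_pos (by positivity) (by linarith))
    _ = 1 / (x - 1) := by field_simp; ring
    _ ≤ 2 / x := by rw [div_le_div_iff₀ (by linarith) (by positivity)]; linarith

theorem abs_log_comp_sub_le {f : ℝ → ℝ} {C : ℝ} (hpos : ∀ x, 1 ≤ x → 0 < f x)
    (hdiff : ∀ x, 1 ≤ x → DifferentiableAt ℝ f x)
    (hlip : ∀ x : ℝ, 0 ≤ x → |deriv (fun t => log (f (exp t))) x| ≤ C)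
    {x y : ℝ} (hx : 1 ≤ x) (hxy : x ≤ y) :
    |log (f y) - log (f x)| ≤ C * (log y - log x) := by
  have hdiffg : ∀ s ∈ Set.Ici (0 : ℝ), DifferentiableAt ℝ (fun s => log (f (exp s))) s :=
    fun s hs =>
      have h1 : 1 ≤ exp s := one_le_exp hs
      ((hdiff _ h1).comp s differentiableAt_exp).log (hpos _ h1).ne'
  have key := (convex_Ici 0).norm_image_sub_le_of_norm_deriv_le hdiffg
    (fun s hs => (norm_eq_abs _).trans_le (hlip s hs))
    (Set.mem_Ici.2 (log_nonneg hx)) (Set.mem_Ici.2 (log_nonneg (hx.trans hxy)))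
  simp only [exp_log (by linarith : (0 : ℝ) < x), exp_log (by linarith : (0 : ℝ) < y),
    norm_eq_abs] at key
  rwa [abs_of_nonneg (sub_nonneg.2 (log_le_log (by linarith) hxy))] at key

theorem le_add_rpow_of_sub_le_rpow {u : ℕ → ℝ} {α : ℝ} (hα : 0 ≤ α) {M : ℕ}
    (h : ∀ n ≥ M, u (n + 1) - u n ≤ ((n : ℝ) + 1) ^ α) :
    ∀ n ≥ M, u n ≤ u M + (n : ℝ) ^ (α + 1) := by
  intro n hn
  induction n, hn using Nat.le_induction with
  | base => linarith [rpow_nonneg (Nat.cast_nonneg M) (α + 1)]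
  | succ n hMn ih =>
    have hpow : (n : ℝ) ^ α ≤ ((n : ℝ) + 1) ^ α := by gcongr; linarith
    have hsucc : (n : ℝ) ^ (α + 1) + ((n : ℝ) + 1) ^ α ≤ ((n : ℝ) + 1) ^ (α + 1) := by
      rw [rpow_add_one' (Nat.cast_nonneg n) (by linarith),
        rpow_add_one' (by positivity) (by linarith)]
      nlinarith [Nat.cast_nonneg (α := ℝ) n]
    push_cast
    linarith [h n hMn]

theorem HasSubpolynomialIncrements.exists_eventually_le_mul_rpow {f : ℝ → ℝ} {t α : ℝ}
    (h : HasSubpolynomialIncrements f t) (hα : 0 < α) :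
    ∃ K, 0 < K ∧ ∀ᶠ n : ℕ in atTop, f ((n : ℝ) ^ t) ≤ K * (n : ℝ) ^ (α + 1) := by
  have hinc : ∀ᶠ n : ℕ in atTop,
      |f ((n : ℝ) ^ t) - f (((n : ℝ) - 1) ^ t)| ≤ (n : ℝ) ^ α := by
    filter_upwards [(h α hα).eventually_lt_const one_pos, eventually_ge_atTop 1]
      with n hn hn1
    exact ((div_lt_one (rpow_pos_of_pos (by exact_mod_cast hn1) α)).1 hn).le
  obtain ⟨M, hM⟩ := eventually_atTop.1 hinc
  have hle := le_add_rpow_of_sub_le_rpow (u := fun n : ℕ => f ((n : ℝ) ^ t)) hα.le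
    (M := M) fun n hn => by simpa using (le_abs_self _).trans (hM (n + 1) (by omega))
  refine ⟨|f ((M : ℝ) ^ t)| + 1, by positivity, ?_⟩
  filter_upwards [eventually_ge_atTop M, eventually_ge_atTop 1] with n hn hn1
  have hpow : 1 ≤ (n : ℝ) ^ (α + 1) := one_le_rpow (by exact_mod_cast hn1) (by linarith)
  nlinarith [hle n hn, le_abs_self (f ((M : ℝ) ^ t)), abs_nonneg (f ((M : ℝ) ^ t))]

section LogLipschitz

variable {f : ℝ → ℝ} {C : ℝ} (hpos : ∀ x, 1 ≤ x → 0 < f x)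
  (hL : ∀ x y, 1 ≤ x → x ≤ y → |log (f y) - log (f x)| ≤ C * (log y - log x))
include hL

include hpos in
theorem le_rpow_mul_of_le_mul (hC : 0 ≤ C) {x y c : ℝ} (hx : 1 ≤ x) (hxy : x ≤ y)
    (hyc : y ≤ c * x) : f x ≤ c ^ C * f y := by
  have hx0 : 0 < x := by linarith
  have hc : 0 < c := pos_of_mul_pos_left (by linarith) hx0.le
  have hlog : log y - log x ≤ log c := by
    rw [← log_div (by linarith) hx0.ne']
    exact log_le_log (div_pos (by linarith) hx0) ((div_le_iff₀ hx0).2 hyc)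
  have hfx : log (f x) ≤ C * log c + log (f y) := by
    linarith [(abs_le.1 (hL x y hx hxy)).1, mul_le_mul_of_nonneg_left hlog hC]
  calc f x = exp (log (f x)) := (exp_log (hpos x hx)).symm
    _ ≤ exp (C * log c + log (f y)) := exp_le_exp.2 hfx
    _ = c ^ C * f y := by
        rw [exp_add, exp_log (hpos y (hx.trans hxy)), rpow_def_of_pos hc, mul_comm C]

theorem eventually_abs_log_div_log_le :
    ∀ᶠ x : ℝ in atTop, |log (f x) / log x| ≤ |log (f 1)| + C := by
  filter_upwards [eventually_ge_atTop (exp 1)] with x hx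
  have hlx : 1 ≤ log x := by simpa using log_le_log (exp_pos 1) hx
  have key := hL 1 x le_rfl ((one_le_exp zero_le_one).trans hx)
  rw [log_one, sub_zero] at key
  have hfx : |log (f x)| ≤ |log (f 1)| + C * log x := by
    linarith [abs_sub_abs_le_abs_sub (log (f x)) (log (f 1))]
  rw [abs_div, abs_of_pos (by linarith : (0 : ℝ) < log x), div_le_iff₀ (by linarith)]
  nlinarith [abs_nonneg (log (f 1))]

theorem isBoundedUnder_le_log_div_log :
    IsBoundedUnder (· ≤ ·) atTop (fun x => log (f x) / log x) :=
  isBoundedUnder_of_eventually_le <|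
    (eventually_abs_log_div_log_le hL).mono fun _ hx => (abs_le.1 hx).2

theorem isCoboundedUnder_le_log_div_log :
    IsCoboundedUnder (· ≤ ·) atTop (fun x => log (f x) / log x) :=
  isCoboundedUnder_le_of_eventually_le atTop <|
    (eventually_abs_log_div_log_le hL).mono fun _ hx => (abs_le.1 hx).1

include hpos in
theorem eventually_le_rpow_of_upperOrder_lt {p : ℝ} (hp : upperOrder f < p) :
    ∀ᶠ x : ℝ in atTop, f x ≤ x ^ p := by
  filter_upwards [eventually_lt_of_limsup_lt hp (isBoundedUnder_le_log_div_log hL),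
    eventually_gt_atTop 1] with x hfx hx
  have hlx : 0 < log x := log_pos hx
  calc f x = exp (log (f x)) := (exp_log (hpos x hx.le)).symm
    _ ≤ exp (log x * p) := exp_le_exp.2 (by rw [mul_comm]; exact ((div_lt_iff₀ hlx).1 hfx).le)
    _ = x ^ p := (rpow_def_of_pos (by linarith) p).symm

include hpos in
theorem upperOrder_le_of_eventually_le_mul_rpow {K p : ℝ} (hK : 0 < K)
    (h : ∀ᶠ x : ℝ in atTop, f x ≤ K * x ^ p) : upperOrder f ≤ p := by
  have hlim : Tendsto (fun x => p + log K / log x) atTop (𝓝 p) := by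
    simpa using tendsto_const_nhds.add (tendsto_const_nhds.div_atTop tendsto_log_atTop)
  calc upperOrder f ≤ limsup (fun x => p + log K / log x) atTop := by
        refine limsup_le_limsup ?_ (isCoboundedUnder_le_log_div_log hL) hlim.isBoundedUnder_le
        filter_upwards [h, eventually_gt_atTop 1] with x hfx hx
        have hx0 : 0 < x := by linarith
        have hlog : log (f x) ≤ log K + p * log x := by
          calc log (f x) ≤ log (K * x ^ p) := log_le_log (hpos x hx.le) hfx
            _ = log K + p * log x := by rw [log_mul hK.ne' (by positivity), log_rpow hx0]
        rw [div_le_iff₀ (log_pos hx), add_mul, div_mul_cancel₀ _ (log_pos hx).ne']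
        linarith
    _ = p := hlim.limsup_eq

include hpos in
theorem tendsto_abs_sub_div_rpow (hC : 0 ≤ C) {p t α : ℝ} (hp : 0 ≤ p) (ht : 0 < t)
    (htp : t * p < 1 + α) (hgrowth : ∀ᶠ x : ℝ in atTop, f x ≤ x ^ p) :
    Tendsto (fun n : ℕ => |f ((n : ℝ) ^ t) - f (((n : ℝ) - 1) ^ t)| / (n : ℝ) ^ α)
      atTop (𝓝 0) := by
  obtain ⟨X, hX⟩ := eventually_atTop.1 hgrowth
  have hlim : Tendsto (fun n : ℕ => 2 * C * t * (n : ℝ) ^ (t * p - 1 - α)) atTop (𝓝 0) := by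
    have := (tendsto_rpow_neg_atTop (by linarith : 0 < -(t * p - 1 - α))).comp
      tendsto_natCast_atTop_atTop
    simpa using this.const_mul (2 * C * t)
  refine squeeze_zero' (Eventually.of_forall fun n => by positivity) ?_ hlim
  have hnt : Tendsto (fun n : ℕ => ((n : ℝ) - 1) ^ t) atTop atTop :=
    (tendsto_rpow_atTop ht).comp (tendsto_atTop_add_const_right _ (-1) tendsto_natCast_atTop_atTop)
  filter_upwards [eventually_ge_atTop 2, hnt.eventually_ge_atTop (max X 1)] with n hn hnX
  have hN : (2 : ℝ) ≤ n := by exact_mod_cast hn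
  set N : ℝ := (n : ℝ)
  have hx1 : 1 ≤ (N - 1) ^ t := (le_max_right _ _).trans hnX
  have hxy : (N - 1) ^ t ≤ N ^ t := rpow_le_rpow (by linarith) (by linarith) ht.le
  have hmax : max (f ((N - 1) ^ t)) (f (N ^ t)) ≤ N ^ (t * p) := by
    rw [rpow_mul (by linarith)]
    exact max_le ((hX _ ((le_max_left _ _).trans hnX)).trans (rpow_le_rpow (by linarith) hxy hp))
      (hX _ ((le_max_left _ _).trans (hnX.trans hxy)))
  have hlog : log (N ^ t) - log ((N - 1) ^ t) ≤ t * (2 / N) := by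
    rw [log_rpow (by linarith), log_rpow (by linarith), ← mul_sub]
    exact mul_le_mul_of_nonneg_left (log_sub_log_sub_one_le hN) ht.le
  have hdiff : |f (N ^ t) - f ((N - 1) ^ t)| ≤ N ^ (t * p) * (C * (t * (2 / N))) :=
    calc |f (N ^ t) - f ((N - 1) ^ t)|
        ≤ max (f ((N - 1) ^ t)) (f (N ^ t)) * |log (f (N ^ t)) - log (f ((N - 1) ^ t))| :=
          abs_sub_le_max_mul_abs_log_sub (hpos _ hx1) (hpos _ (hx1.trans hxy))
      _ ≤ N ^ (t * p) * (C * (t * (2 / N))) := by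
          gcongr
          exact (hL _ _ hx1 hxy).trans (mul_le_mul_of_nonneg_left hlog hC)
  have hN0 : 0 < N := by linarith
  calc |f (N ^ t) - f ((N - 1) ^ t)| / N ^ α ≤ N ^ (t * p) * (C * (t * (2 / N))) / N ^ α := by
        gcongr
    _ = 2 * C * t * N ^ (t * p - 1 - α) := by
        rw [rpow_sub hN0, rpow_sub_one hN0.ne']; ring

include hpos in
theorem eventually_le_mul_rpow_of_natCast_rpow (hC : 0 ≤ C) {t K q : ℝ} (ht : 0 < t)
    (hK : 0 ≤ K) (hq : 0 ≤ q)
    (h : ∀ᶠ n : ℕ in atTop, f ((n : ℝ) ^ t) ≤ K * (n : ℝ) ^ q) :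
    ∀ᶠ x : ℝ in atTop, f x ≤ (2 ^ t) ^ C * K * 2 ^ q * x ^ (q / t) := by
  obtain ⟨M, hM⟩ := eventually_atTop.1 h
  filter_upwards [eventually_ge_atTop (max ((M : ℝ) ^ t) 1)] with x hx
  have hx1 : 1 ≤ x := (le_max_right _ _).trans hx
  set y := x ^ t⁻¹
  have hy1 : 1 ≤ y := one_le_rpow hx1 (inv_nonneg.2 ht.le)
  have hyx : y ^ t = x := rpow_inv_rpow (by linarith) ht.ne'
  set m := ⌈y⌉₊
  have hym : y ≤ m := Nat.le_ceil y
  have hmy : (m : ℝ) ≤ 2 * y := by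
    linarith [Nat.ceil_lt_add_one (by linarith : (0 : ℝ) ≤ y)]
  have hMm : M ≤ m := by
    have hMy : (M : ℝ) ≤ y := by
      simpa [rpow_rpow_inv (Nat.cast_nonneg M) ht.ne'] using
        rpow_le_rpow (by positivity) ((le_max_left _ _).trans hx) (inv_nonneg.2 ht.le)
    exact_mod_cast hMy.trans hym
  have hxm : x ≤ (m : ℝ) ^ t := hyx ▸ rpow_le_rpow (by linarith) hym ht.le
  have hmx : (m : ℝ) ^ t ≤ 2 ^ t * x := by
    rw [← hyx, ← mul_rpow zero_le_two (by linarith)]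
    exact rpow_le_rpow (by positivity) hmy ht.le
  have hyq : y ^ q = x ^ (q / t) := by rw [← rpow_mul (by linarith), inv_mul_eq_div]
  calc f x ≤ (2 ^ t) ^ C * f ((m : ℝ) ^ t) := le_rpow_mul_of_le_mul hpos hL hC hx1 hxm hmx
    _ ≤ (2 ^ t) ^ C * (K * (2 * y) ^ q) := by
        gcongr
        exact (hM m hMm).trans (by gcongr)
    _ = (2 ^ t) ^ C * K * 2 ^ q * x ^ (q / t) := by
        rw [mul_rpow zero_le_two (by linarith), hyq]; ring

include hpos in
theorem upperOrder_le_inv_of_hasSubpolynomialIncrements (hC : 0 ≤ C) {t : ℝ} (ht : 0 < t)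
    (h : HasSubpolynomialIncrements f t) : upperOrder f ≤ t⁻¹ := by
  refine le_of_forall_pos_le_add fun ε hε => ?_
  obtain ⟨K, hK, hfn⟩ := h.exists_eventually_le_mul_rpow (mul_pos ht hε)
  calc upperOrder f ≤ (t * ε + 1) / t :=
        upperOrder_le_of_eventually_le_mul_rpow hpos hL (by positivity)
          (eventually_le_mul_rpow_of_natCast_rpow hpos hL hC ht hK.le (by positivity) hfn)
    _ = t⁻¹ + ε := by field_simp; ring

include hpos in
theorem hasSubpolynomialIncrements_iff (hC : 0 ≤ C) (hd : 0 ≤ upperOrder f) {t : ℝ}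
    (ht : 0 < t) : HasSubpolynomialIncrements f t ↔ upperOrder f ≤ t⁻¹ := by
  refine ⟨upperOrder_le_inv_of_hasSubpolynomialIncrements hpos hL hC ht, fun htd α hα => ?_⟩
  have hp : upperOrder f < upperOrder f + α / (2 * t) := by
    linarith [div_pos hα (mul_pos two_pos ht)]
  refine tendsto_abs_sub_div_rpow hpos hL hC (hd.trans hp.le) ht ?_
    (eventually_le_rpow_of_upperOrder_lt hpos hL hp)
  calc t * (upperOrder f + α / (2 * t)) = t * upperOrder f + α / 2 := by field_simp
    _ ≤ t * t⁻¹ + α / 2 := by gcongr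
    _ < 1 + α := by rw [mul_inv_cancel₀ ht.ne']; linarith

end LogLipschitz

theorem stmt7 (f : ℝ → ℝ) (C : ℝ)
    (hpos : ∀ x, 1 ≤ x → 0 < f x)
    (hdiff : ∀ x, 1 ≤ x → DifferentiableAt ℝ f x)
    (hlip : ∀ x : ℝ, 0 ≤ x → |deriv (fun t => Real.log (f (Real.exp t))) x| ≤ C)
    (d : ℝ) (hd : d = limsup (fun x : ℝ => Real.log (f x) / Real.log x) atTop) :
    (0 < d →
      {t : ℝ | 0 < t ∧ ∀ α : ℝ, 0 < α →
          Tendsto (fun n : ℕ => |f ((n : ℝ) ^ t) - f (((n : ℝ) - 1) ^ t)| / (n : ℝ) ^ α)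
            atTop (nhds 0)} = Set.Ioc 0 d⁻¹) ∧
    (d = 0 →
      {t : ℝ | 0 < t ∧ ∀ α : ℝ, 0 < α →
          Tendsto (fun n : ℕ => |f ((n : ℝ) ^ t) - f (((n : ℝ) - 1) ^ t)| / (n : ℝ) ^ α)
            atTop (nhds 0)} = Set.Ioi 0) := by
  have hC : 0 ≤ C := (abs_nonneg _).trans (hlip 0 le_rfl)
  have hL : ∀ x y, 1 ≤ x → x ≤ y → |log (f y) - log (f x)| ≤ C * (log y - log x) :=
    fun _ _ hx hxy => abs_log_comp_sub_le hpos hdiff hlip hx hxy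
  change d = upperOrder f at hd
  subst hd
  refine ⟨fun hd_pos => ?_, fun hd_zero => ?_⟩
  · ext t
    exact and_congr_right fun ht =>
      (hasSubpolynomialIncrements_iff hpos hL hC hd_pos.le ht).trans (le_inv_comm₀ hd_pos ht)
  · ext t
    exact and_iff_left_of_imp fun ht =>
      (hasSubpolynomialIncrements_iff hpos hL hC hd_zero.ge ht).2 (by rw [hd_zero]; positivity)
end
end

section
/- Let f : [1,∞) → (0,∞) be differentiable with |d/dx ln(f(e^x))| ≤ C for some finite C. If limsup_{x→∞} ln(f(x))/ln(x) > 0, then limsup_{n→∞} ln|f(2^n) − f(2^{n−1})| / ln(n) = ∞. -/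
/-!
Along `t = log x` the function `g t = log f (e^t)` is `C`-Lipschitz, so positive upper
order `c` passes from the points where `g t > c t` to the nearest dyadic exponents:
`f (2^N) ≥ e^{c' N - D}` for infinitely many `N`. The increments `f (2^n) - f (2^{n-1})`
for `K < n ≤ N` telescope to `f (2^N) - f (2^K)`, which is at least half of `f (2^N)` once
`N` is large; hence one of these `N - K` increments is at least `e^{c' N - D} / (2N)`,
whose logarithm beats `M log N` for every `M`.
-/

open Filter Real

noncomputable section

/-- Extended-real logarithm with the convention `ln(0) = -∞`. -/
def elog (x : ℝ) : EReal := if x = 0 then ⊥ else ((Real.log x : ℝ) : EReal)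

lemma Real.exists_pos_frequently_lt_of_limsup_pos {ι : Type*} {l : Filter ι} {u : ι → ℝ}
    (h : 0 < limsup u l) : ∃ c, 0 < c ∧ ∃ᶠ i in l, c < u i := by
  -- a real `limsup` that is not cobounded has the junk value `0`
  have hcob : IsCoboundedUnder (· ≤ ·) l u := by
    by_contra hnot
    exact h.ne' (Real.limsup_of_not_isCoboundedUnder hnot)
  exact ⟨limsup u l / 2, half_pos h, frequently_lt_of_lt_limsup hcob (half_lt_self h)⟩

lemma frequently_mul_lt_comp_exp {φ : ℝ → ℝ} {c : ℝ}
    (h : ∃ᶠ x in atTop, c < φ x / log x) : ∃ᶠ t in atTop, c * t < φ (exp t) := by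
  refine tendsto_log_atTop.frequently ((h.and_eventually (eventually_gt_atTop 1)).mono ?_)
  rintro x ⟨hcx, hx⟩
  rw [exp_log (by linarith)]
  exact (lt_div_iff₀ (log_pos hx)).mp hcx

lemma frequently_le_comp_natCast_mul {g : ℝ → ℝ} {c C h : ℝ} (hc : 0 ≤ c) (hC : 0 ≤ C)
    (hh : 0 < h) (hg : ∀ s ≥ 0, ∀ t ≥ 0, |g t - g s| ≤ C * |t - s|)
    (hfreq : ∃ᶠ t in atTop, c * t < g t) :
    ∃ᶠ N : ℕ in atTop, c * (N * h) - (c + C) * h ≤ g (N * h) := by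
  rw [frequently_atTop] at hfreq ⊢
  intro K
  obtain ⟨t, hKt, hct⟩ := hfreq (K * h)
  have ht : 0 ≤ t := (by positivity : (0 : ℝ) ≤ K * h).trans hKt
  set N := ⌈t / h⌉₊
  have htN : t ≤ N * h := (div_le_iff₀ hh).mp (Nat.le_ceil _)
  have hNt : N * h < t + h := by
    have := mul_lt_mul_of_pos_right (Nat.ceil_lt_add_one (div_nonneg ht hh.le)) hh
    rwa [add_mul, div_mul_cancel₀ _ hh.ne', one_mul] at this
  refine ⟨N, ?_, ?_⟩
  · exact_mod_cast ((le_div_iff₀ hh).mpr hKt).trans (Nat.le_ceil _)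
  · have hlip := hg t ht (N * h) (ht.trans htN)
    rw [abs_of_nonneg (sub_nonneg.mpr htN)] at hlip
    have hCh : C * (N * h - t) ≤ C * h := mul_le_mul_of_nonneg_left (by linarith) hC
    have hct' : c * (N * h - h) ≤ c * t := mul_le_mul_of_nonneg_left (by linarith) hc
    linarith [(abs_le.mp hlip).1]

lemma exists_mem_Ico_sub_le_mul_abs_sub_succ (F : ℕ → ℝ) {K N : ℕ} (hKN : K < N) :
    ∃ n ∈ Finset.Ico K N, F N - F K ≤ (N - K : ℝ) * |F (n + 1) - F n| := by
  by_contra! hlt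
  have hsum := Finset.sum_lt_sum_of_nonempty (Finset.nonempty_Ico.mpr hKN) hlt
  rw [Finset.sum_const, Nat.card_Ico, nsmul_eq_mul, Nat.cast_sub hKN.le, ← Finset.mul_sum] at hsum
  have htel : F N - F K ≤ ∑ n ∈ Finset.Ico K N, |F (n + 1) - F n| :=
    (Finset.sum_Ico_sub F hKN.le).symm.trans_le (Finset.sum_le_sum fun n _ => le_abs_self _)
  have hKN' : (0 : ℝ) < N - K := sub_pos.mpr (by exact_mod_cast hKN)
  nlinarith

lemma eventually_mul_log_add_le_mul (a b : ℝ) {c : ℝ} (hc : 0 < c) :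
    ∀ᶠ x : ℝ in atTop, a * log x + b ≤ c * x := by
  have ho : (fun x => a * log x + b) =o[atTop] id :=
    (isLittleO_log_id_atTop.const_mul_left a).add (Asymptotics.isLittleO_const_id_atTop b)
  filter_upwards [ho.bound hc, eventually_ge_atTop 0] with x hx hx0
  rw [Real.norm_eq_abs, id, Real.norm_of_nonneg hx0] at hx
  exact (le_abs_self _).trans hx

lemma frequently_mul_log_le_log_abs_sub_succ {F : ℕ → ℝ} {c D : ℝ} (hc : 0 < c)
    (hF : ∃ᶠ N : ℕ in atTop, exp (c * N - D) ≤ F N) (M : ℝ) :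
    ∃ᶠ n : ℕ in atTop, M * log (n + 1) ≤ log |F (n + 1) - F n| := by
  rw [frequently_atTop]
  intro K
  set M' := max M 0
  have hev : ∀ᶠ N : ℕ in atTop, (M' + 1) * log N + (D + log 2 + 2 * |F K|) ≤ c * N :=
    tendsto_natCast_atTop_atTop.eventually (eventually_mul_log_add_le_mul _ _ hc)
  obtain ⟨N, hFN, hlarge, hKN⟩ := (hF.and_eventually (hev.and (eventually_gt_atTop K))).exists
  obtain ⟨n, hn, hdiff⟩ := exists_mem_Ico_sub_le_mul_abs_sub_succ F hKN
  obtain ⟨hKn, hnN⟩ := Finset.mem_Ico.mp hn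
  refine ⟨n, hKn, ?_⟩
  have hN : (1 : ℝ) ≤ N := by exact_mod_cast Nat.one_le_of_lt hKN
  have hlogN : 0 ≤ log N := log_nonneg hN
  -- `exp` beats `2 |F K|`, so the increment `F N - F K` is at least half of `F N`
  have hhalf : exp (c * N - D) / 2 ≤ F N - F K := by
    have := add_one_le_exp (c * N - D)
    have : 0 ≤ (M' + 1) * log N := mul_nonneg (by positivity) hlogN
    linarith [le_abs_self (F K), log_nonneg one_le_two]
  have hstep : exp (c * N - D) / (2 * N) ≤ |F (n + 1) - F n| := by
    rw [← div_div, div_le_iff₀ (by positivity)]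
    have : (N - K : ℝ) ≤ N := by linarith [(Nat.cast_nonneg K : (0 : ℝ) ≤ K)]
    nlinarith [abs_nonneg (F (n + 1) - F n)]
  calc M * log (n + 1) ≤ M' * log N :=
        mul_le_mul (le_max_left _ _) (log_le_log (by positivity) (by exact_mod_cast hnN))
          (log_nonneg (by linarith [(Nat.cast_nonneg n : (0 : ℝ) ≤ n)])) (le_max_right _ _)
    _ ≤ c * N - D - log (2 * N) := by
        rw [log_mul two_ne_zero (by positivity)]; linarith [abs_nonneg (F K)]
    _ = log (exp (c * N - D) / (2 * N)) := by
        rw [log_div (exp_pos _).ne' (by positivity), log_exp]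
    _ ≤ log |F (n + 1) - F n| := log_le_log (by positivity) hstep

lemma EReal.limsup_eq_top_of_forall_frequently {α : Type*} {l : Filter α} {u : α → EReal}
    (h : ∀ M : ℝ, ∃ᶠ x in l, (M : EReal) ≤ u x) : limsup u l = ⊤ :=
  (EReal.eq_top_iff_forall_lt _).mpr fun M =>
    (EReal.coe_lt_coe_iff.mpr (lt_add_one M)).trans_le (le_limsup_of_frequently_le' (h (M + 1)))

lemma coe_le_elog_div_log {M d m : ℝ} (hM : 0 < M) (hm : 1 < m) (h : M * log m ≤ log d) :
    (M : EReal) ≤ elog d / (log m : EReal) := by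
  have hd : d ≠ 0 := by
    rintro rfl
    rw [log_zero] at h
    nlinarith [log_pos hm]
  rw [elog, if_neg hd, ← EReal.coe_div, EReal.coe_le_coe_iff, le_div_iff₀ (log_pos hm)]
  linarith

theorem stmt8 (f : ℝ → ℝ) (C : ℝ)
    (hpos : ∀ x, 1 ≤ x → 0 < f x)
    (hdiff : ∀ x, 1 ≤ x → DifferentiableAt ℝ f x)
    (hlip : ∀ x : ℝ, 0 ≤ x → |deriv (fun t => Real.log (f (Real.exp t))) x| ≤ C)
    (hpos' : 0 < limsup (fun x : ℝ => Real.log (f x) / Real.log x) atTop) :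
    limsup (fun n : ℕ =>
        elog |f ((2 : ℝ) ^ (n : ℝ)) - f ((2 : ℝ) ^ ((n : ℝ) - 1))| / ((Real.log n : ℝ) : EReal))
      atTop = (⊤ : EReal) := by
  obtain ⟨c, hc, hfreq⟩ := Real.exists_pos_frequently_lt_of_limsup_pos hpos'
  have hC : 0 ≤ C := (abs_nonneg _).trans (hlip 0 le_rfl)
  have hlog2 : 0 < log 2 := log_pos one_lt_two
  have hg : ∀ s ≥ 0, ∀ t ≥ 0, |log (f (exp t)) - log (f (exp s))| ≤ C * |t - s| := by
    have hgd : ∀ t ∈ Set.Ici (0 : ℝ), DifferentiableAt ℝ (fun t => log (f (exp t))) t :=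
      fun t ht => ((hdiff _ (one_le_exp ht)).comp t differentiableAt_exp).log
        (hpos _ (one_le_exp ht)).ne'
    intro s hs t ht
    exact Convex.norm_image_sub_le_of_norm_deriv_le hgd hlip (convex_Ici 0) hs ht
  have hgrowth :
      ∃ᶠ N : ℕ in atTop, exp (c * log 2 * N - (c + C) * log 2) ≤ f (2 ^ (N : ℝ)) := by
    refine (frequently_le_comp_natCast_mul hc.le hC hlog2 hg
      (frequently_mul_lt_comp_exp hfreq)).mono fun N hN => ?_
    have h2N : (2 : ℝ) ^ (N : ℝ) = exp (N * log 2) := by rw [rpow_def_of_pos two_pos, mul_comm]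
    rw [h2N, ← exp_log (hpos _ (one_le_exp (by positivity))), exp_le_exp]
    linarith
  refine EReal.limsup_eq_top_of_forall_frequently fun M => (tendsto_add_atTop_nat 1).frequently ?_
  refine ((frequently_mul_log_le_log_abs_sub_succ (mul_pos hc hlog2) hgrowth (max M 1)
    ).and_eventually (eventually_ge_atTop 1)).mono fun n ⟨hn, hn1⟩ => ?_
  push_cast at hn ⊢
  rw [add_sub_cancel_right]
  exact (EReal.coe_le_coe_iff.mpr (le_max_left M 1)).trans
    (coe_le_elog_div_log (by positivity) (by norm_cast; omega) hn)
end
end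

section
/- Suppose 2 ≤ q < ∞, g : ℝ^δ → ℝ is rapidly decreasing with g ≥ 0 and its negative radial derivative h ≥ 0. If μ is a finite Borel measure on ℝ^δ, then d/dε ‖g_ε*μ‖_{μ,q−1} = [∫ (g_ε*μ)^{q−2}(h_ε*μ) dμ] / (ε ‖g_ε*μ‖_{μ,q−1}^{q−2}) − δ ‖g_ε*μ‖_{μ,q−1} / ε. -/
open MeasureTheory Filter Real Topology

noncomputable section

/-- The `L^p` norm against the measure `μ`: `‖f‖_{μ,p} = (∫ f^p dμ)^{1/p}`. -/
def lqNormMu (δ : ℕ) (μ : Measure (EuclideanSpace ℝ (Fin δ))) (p : ℝ)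
    (f : EuclideanSpace ℝ (Fin δ) → ℝ) : ℝ :=
  (∫ x, f x ^ p ∂μ) ^ (1 / p)

/-- The grid cell `εk + ε[0,1)^δ`. -/
def cell (δ : ℕ) (ε : ℝ) (k : Fin δ → ℤ) : Set (EuclideanSpace ℝ (Fin δ)) :=
  {x | ∀ i, x i ∈ Set.Ico (ε * k i) (ε * (k i + 1))}

/-- The standard partition function `S_μ^q(ε) = ∑_{k ∈ ℤ^δ} μ(εk + ε𝕀)^q`. -/
def Spart (δ : ℕ) (μ : Measure (EuclideanSpace ℝ (Fin δ))) (q ε : ℝ) : ENNReal :=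
  ∑' k : Fin δ → ℤ, μ (cell δ ε k) ^ q

theorem negRad_continuous (δ : ℕ) (g : EuclideanSpace ℝ (Fin δ) → ℝ) (hsm : ContDiff ℝ (⊤ : ℕ∞) g) :
    Continuous (negRad δ g) := by
  have h1 : Continuous (fderiv ℝ g) := hsm.continuous_fderiv (by simp)
  exact (h1.clm_apply continuous_id).neg


theorem kernelDeriv (δ : ℕ) (g : EuclideanSpace ℝ (Fin δ) → ℝ) (hsm : ContDiff ℝ (⊤ : ℕ∞) g)
    (z : EuclideanSpace ℝ (Fin δ)) {e : ℝ} (he : 0 < e) :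
    HasDerivAt (fun e : ℝ => e ^ (-(δ : ℝ)) * g (e⁻¹ • z))
      (e⁻¹ * (e ^ (-(δ : ℝ)) * negRad δ g (e⁻¹ • z) - (δ : ℝ) * (e ^ (-(δ : ℝ)) * g (e⁻¹ • z)))) e := by
  have h1 : HasDerivAt (fun e : ℝ => e ^ (-(δ : ℝ))) (-(δ : ℝ) * e ^ (-(δ : ℝ) - 1)) e :=
    Real.hasDerivAt_rpow_const (Or.inl he.ne')
  have hsmul : HasDerivAt (fun e : ℝ => e⁻¹ • z) ((-(e ^ 2)⁻¹) • z) e :=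
    (hasDerivAt_inv he.ne').smul_const z
  have h2 : HasDerivAt (fun e : ℝ => g (e⁻¹ • z))
      (fderiv ℝ g (e⁻¹ • z) ((-(e ^ 2)⁻¹) • z)) e :=
    ((hsm.differentiable (by simp) (e⁻¹ • z)).hasFDerivAt).comp_hasDerivAt e hsmul
  have key := h1.fun_mul h2
  refine key.congr_deriv ?_
  rw [negRad]
  simp only [_root_.map_smul, smul_eq_mul]
  rw [Real.rpow_sub he, Real.rpow_one]
  field_simp
  ring


theorem bounds (δ : ℕ) (g : EuclideanSpace ℝ (Fin δ) → ℝ)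
    (hdecay : ∀ k n : ℕ, ∃ C, ∀ x, ‖x‖ ^ k * ‖iteratedFDeriv ℝ n g x‖ ≤ C) :
    ∃ C : ℝ, 1 ≤ C ∧ ∀ x : EuclideanSpace ℝ (Fin δ),
      |g x| ≤ C ∧ |negRad δ g x| ≤ C ∧ ‖x‖ * ‖fderiv ℝ g x‖ ≤ C ∧
      ‖x‖ ^ 2 * ‖fderiv ℝ (fderiv ℝ g) x‖ ≤ C := by
  obtain ⟨C0, h0⟩ := hdecay 0 0
  obtain ⟨C1, h1⟩ := hdecay 1 1
  obtain ⟨C2, h2⟩ := hdecay 2 2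
  have e1 : ∀ x, ‖fderiv ℝ g x‖ = ‖iteratedFDeriv ℝ 1 g x‖ := fun x => by
    rw [← norm_iteratedFDeriv_fderiv, norm_iteratedFDeriv_zero]
  have e2 : ∀ x, ‖fderiv ℝ (fderiv ℝ g) x‖ = ‖iteratedFDeriv ℝ 2 g x‖ := fun x => by
    rw [← norm_iteratedFDeriv_fderiv, ← norm_iteratedFDeriv_fderiv, norm_iteratedFDeriv_zero]
  refine ⟨max 1 (max C0 (max C1 C2)), le_max_left _ _, fun x => ?_⟩
  have hg : |g x| ≤ C0 := by
    have := h0 x; simpa [norm_iteratedFDeriv_zero, Real.norm_eq_abs] using this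
  have hf1 : ‖x‖ * ‖fderiv ℝ g x‖ ≤ C1 := by
    have := h1 x; rw [e1]; simpa using this
  have hf2 : ‖x‖ ^ 2 * ‖fderiv ℝ (fderiv ℝ g) x‖ ≤ C2 := by
    have := h2 x; rw [e2]; simpa using this
  have hnr : |negRad δ g x| ≤ C1 := by
    rw [negRad, abs_neg, ← Real.norm_eq_abs]
    calc ‖fderiv ℝ g x x‖ ≤ ‖fderiv ℝ g x‖ * ‖x‖ := (fderiv ℝ g x).le_opNorm x
    _ ≤ C1 := by rw [mul_comm]; exact hf1
  refine ⟨hg.trans ?_, hnr.trans ?_, hf1.trans ?_, hf2.trans ?_⟩ <;>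
    simp [le_max_iff, le_refl]


theorem integrable_bdd {δ : ℕ} {μ : Measure (EuclideanSpace ℝ (Fin δ))} [IsFiniteMeasure μ]
    {f : EuclideanSpace ℝ (Fin δ) → ℝ} (hf : AEStronglyMeasurable f μ) {C : ℝ}
    (hC : ∀ y, |f y| ≤ C) : Integrable f μ :=
  (integrable_const C).mono' hf (ae_of_all _ (by simpa [Real.norm_eq_abs] using hC))

theorem kernel_cont (δ : ℕ) {g : EuclideanSpace ℝ (Fin δ) → ℝ} (hg : Continuous g)
    (c : ℝ) (x : EuclideanSpace ℝ (Fin δ)) (e : ℝ) :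
    Continuous (fun y => c * g (e⁻¹ • (x - y))) :=
  continuous_const.mul (hg.comp (by fun_prop))


theorem mconv_hasDerivAt (δ : ℕ) {g : EuclideanSpace ℝ (Fin δ) → ℝ} (hsm : ContDiff ℝ (⊤ : ℕ∞) g)
    {C : ℝ} (hC : ∀ x, |g x| ≤ C ∧ |negRad δ g x| ≤ C)
    (μ : Measure (EuclideanSpace ℝ (Fin δ))) [IsFiniteMeasure μ]
    {e : ℝ} (he : 0 < e) (x : EuclideanSpace ℝ (Fin δ)) :
    HasDerivAt (fun e' => mconv δ g e' μ x)
      (e⁻¹ * (mconv δ (negRad δ g) e μ x - δ * mconv δ g e μ x)) e := by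
  have hC0 : 0 ≤ C := (abs_nonneg _).trans (hC 0).1
  set F : ℝ → EuclideanSpace ℝ (Fin δ) → ℝ :=
    fun e' y => e' ^ (-(δ : ℝ)) * g (e'⁻¹ • (x - y)) with hF
  set F' : ℝ → EuclideanSpace ℝ (Fin δ) → ℝ := fun e' y =>
    e'⁻¹ * (e' ^ (-(δ : ℝ)) * negRad δ g (e'⁻¹ • (x - y)) -
      (δ : ℝ) * (e' ^ (-(δ : ℝ)) * g (e'⁻¹ • (x - y)))) with hF'
  have he2 : (0:ℝ) < e / 2 := half_pos he
  have hball : ∀ e' ∈ Metric.ball e (e / 2), e / 2 ≤ e' := by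
    intro e' he'
    rw [Metric.mem_ball, Real.dist_eq, abs_lt] at he'
    linarith [he'.1]
  set B : ℝ := (e / 2)⁻¹ * ((e / 2) ^ (-(δ : ℝ)) * C * (1 + δ)) with hB
  have hmeas : ∀ e', AEStronglyMeasurable (F e') μ :=
    fun e' => (kernel_cont δ hsm.continuous _ x e').aestronglyMeasurable
  have hmeas' : AEStronglyMeasurable (F' e) μ := by
    apply Continuous.aestronglyMeasurable
    exact continuous_const.mul ((kernel_cont δ (negRad_continuous δ g hsm) _ x e).sub
      (continuous_const.mul (kernel_cont δ hsm.continuous _ x e)))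
  have hFint : Integrable (F e) μ := by
    refine integrable_bdd (hmeas e) (C := e ^ (-(δ : ℝ)) * C) fun y => ?_
    rw [abs_mul, abs_of_nonneg (Real.rpow_nonneg he.le _)]
    exact mul_le_mul_of_nonneg_left (hC _).1 (Real.rpow_nonneg he.le _)
  have hbound : ∀ᵐ y ∂μ, ∀ e' ∈ Metric.ball e (e / 2), ‖F' e' y‖ ≤ B := by
    refine ae_of_all _ fun y e' he' => ?_
    have h1 : e / 2 ≤ e' := hball e' he'
    have he'0 : 0 < e' := lt_of_lt_of_le he2 h1
    have hr : e' ^ (-(δ : ℝ)) ≤ (e / 2) ^ (-(δ : ℝ)) :=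
      Real.rpow_le_rpow_of_nonpos he2 h1 (neg_nonpos.2 (Nat.cast_nonneg δ))
    have hrn : 0 ≤ e' ^ (-(δ : ℝ)) := Real.rpow_nonneg he'0.le _
    have hinv : e'⁻¹ ≤ (e / 2)⁻¹ := inv_anti₀ he2 h1
    rw [Real.norm_eq_abs, hF', abs_mul, abs_of_nonneg (inv_nonneg.2 he'0.le)]
    refine mul_le_mul hinv ?_ (abs_nonneg _) (inv_nonneg.2 he2.le)
    calc |e' ^ (-(δ : ℝ)) * negRad δ g (e'⁻¹ • (x - y)) -
          (δ : ℝ) * (e' ^ (-(δ : ℝ)) * g (e'⁻¹ • (x - y)))|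
        ≤ |e' ^ (-(δ : ℝ)) * negRad δ g (e'⁻¹ • (x - y))| +
          |(δ : ℝ) * (e' ^ (-(δ : ℝ)) * g (e'⁻¹ • (x - y)))| := abs_sub _ _
      _ ≤ e' ^ (-(δ : ℝ)) * C + (δ : ℝ) * (e' ^ (-(δ : ℝ)) * C) := by
          gcongr
          · rw [abs_mul, abs_of_nonneg hrn]
            exact mul_le_mul_of_nonneg_left (hC _).2 hrn
          · rw [abs_mul, abs_of_nonneg (by positivity : (0:ℝ) ≤ (δ:ℝ))]
            refine mul_le_mul_of_nonneg_left ?_ (by positivity)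
            rw [abs_mul, abs_of_nonneg hrn]
            exact mul_le_mul_of_nonneg_left (hC _).1 hrn
      _ ≤ (e / 2) ^ (-(δ : ℝ)) * C * (1 + δ) := by
          have h3 : e' ^ (-(δ : ℝ)) * C ≤ (e / 2) ^ (-(δ : ℝ)) * C :=
            mul_le_mul_of_nonneg_right hr hC0
          nlinarith [mul_le_mul_of_nonneg_left h3 (Nat.cast_nonneg (α := ℝ) δ)]
  have hdiff : ∀ᵐ y ∂μ, ∀ e' ∈ Metric.ball e (e / 2), HasDerivAt (F · y) (F' e' y) e' := by
    refine ae_of_all _ fun y e' he' => ?_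
    exact kernelDeriv δ g hsm (x - y) (lt_of_lt_of_le he2 (hball e' he'))
  have := (hasDerivAt_integral_of_dominated_loc_of_deriv_le (Metric.ball_mem_nhds e he2)
    (Filter.Eventually.of_forall hmeas) hFint hmeas' hbound (integrable_const B) hdiff).2
  have hA : Integrable (fun y => e ^ (-(δ : ℝ)) * negRad δ g (e⁻¹ • (x - y))) μ := by
    refine integrable_bdd (Continuous.aestronglyMeasurable ?_) (C := e ^ (-(δ : ℝ)) * C) fun y => ?_
    · exact kernel_cont δ (negRad_continuous δ g hsm) _ x e
    · rw [abs_mul, abs_of_nonneg (Real.rpow_nonneg he.le _)]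
      exact mul_le_mul_of_nonneg_left (hC _).2 (Real.rpow_nonneg he.le _)
  have key : (∫ y, F' e y ∂μ) = e⁻¹ * (mconv δ (negRad δ g) e μ x - δ * mconv δ g e μ x) := by
    rw [hF']
    simp only
    rw [integral_const_mul]
    rw [MeasureTheory.integral_sub hA (hFint.const_mul _)]
    rw [integral_const_mul ((δ:ℝ))]
    rfl
  rw [key] at this
  exact this

theorem mconv_nonneg (δ : ℕ) {g : EuclideanSpace ℝ (Fin δ) → ℝ} (hg : ∀ x, 0 ≤ g x)
    {μ : Measure (EuclideanSpace ℝ (Fin δ))} {e : ℝ} (he : 0 ≤ e) (x : EuclideanSpace ℝ (Fin δ)) :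
    0 ≤ mconv δ g e μ x :=
  integral_nonneg fun y => mul_nonneg (Real.rpow_nonneg he _) (hg _)

theorem mconv_abs_le (δ : ℕ) {g : EuclideanSpace ℝ (Fin δ) → ℝ} {C : ℝ} (hC : ∀ x, |g x| ≤ C)
    {μ : Measure (EuclideanSpace ℝ (Fin δ))} [IsFiniteMeasure μ] {e : ℝ} (he : 0 ≤ e)
    (x : EuclideanSpace ℝ (Fin δ)) :
    |mconv δ g e μ x| ≤ e ^ (-(δ : ℝ)) * C * (μ Set.univ).toReal := by
  rw [← Real.norm_eq_abs, mconv]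
  refine norm_integral_le_of_norm_le_const (ae_of_all _ fun y => ?_)
  rw [Real.norm_eq_abs, abs_mul, abs_of_nonneg (Real.rpow_nonneg he _)]
  exact mul_le_mul_of_nonneg_left (hC _) (Real.rpow_nonneg he _)

theorem mconv_continuous (δ : ℕ) {g : EuclideanSpace ℝ (Fin δ) → ℝ} (hgc : Continuous g)
    {C : ℝ} (hC : ∀ x, |g x| ≤ C)
    {μ : Measure (EuclideanSpace ℝ (Fin δ))} [IsFiniteMeasure μ] (e : ℝ) :
    Continuous (fun x => mconv δ g e μ x) := by
  refine continuous_of_dominated (fun x => (kernel_cont δ hgc _ x e).aestronglyMeasurable)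
    (fun x => ae_of_all _ fun y => ?_) (integrable_const (|e ^ (-(δ:ℝ))| * C))
    (ae_of_all _ fun y => ?_)
  · rw [Real.norm_eq_abs, abs_mul]
    exact mul_le_mul_of_nonneg_left (hC _) (abs_nonneg _)
  · exact continuous_const.mul (hgc.comp (by fun_prop))

theorem I_hasDerivAt (δ : ℕ) {q : ℝ} (hq : 2 ≤ q) {g : EuclideanSpace ℝ (Fin δ) → ℝ}
    (hsm : ContDiff ℝ (⊤ : ℕ∞) g) {C : ℝ} (hC1 : 1 ≤ C)
    (hC : ∀ x, |g x| ≤ C ∧ |negRad δ g x| ≤ C) (hg : ∀ x, 0 ≤ g x)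
    (μ : Measure (EuclideanSpace ℝ (Fin δ))) [IsFiniteMeasure μ]
    {ε : ℝ} (hε : 0 < ε) :
    HasDerivAt (fun e => ∫ x, (mconv δ g e μ x) ^ (q - 1) ∂μ)
      ((q - 1) * ε⁻¹ *
        ((∫ x, (mconv δ g ε μ x) ^ (q - 2) * mconv δ (negRad δ g) ε μ x ∂μ) -
          δ * ∫ x, (mconv δ g ε μ x) ^ (q - 1) ∂μ)) ε := by
  have hC0 : 0 ≤ C := zero_le_one.trans hC1
  have hε2 : (0:ℝ) < ε / 2 := half_pos hε
  set M : ℝ := (ε / 2) ^ (-(δ : ℝ)) * C * (μ Set.univ).toReal + 1 with hM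
  have hM1 : (0:ℝ) ≤ M - 1 := by
    have : (0:ℝ) ≤ (ε / 2) ^ (-(δ : ℝ)) * C * (μ Set.univ).toReal := by positivity
    simpa [hM] using this
  have hMpos : (0:ℝ) < M := by linarith
  have hball : ∀ e ∈ Metric.ball ε (ε / 2), ε / 2 ≤ e ∧ 0 < e := by
    intro e he
    rw [Metric.mem_ball, Real.dist_eq, abs_lt] at he
    constructor <;> linarith [he.1]
  -- uniform bounds on mconv for e in the ball
  have hbd : ∀ e, ε / 2 ≤ e → ∀ x, |mconv δ g e μ x| ≤ M - 1 ∧ |mconv δ (negRad δ g) e μ x| ≤ M - 1 := by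
    intro e hee x
    have he0 : 0 < e := lt_of_lt_of_le hε2 hee
    have hre : e ^ (-(δ : ℝ)) ≤ (ε / 2) ^ (-(δ : ℝ)) :=
      Real.rpow_le_rpow_of_nonpos hε2 hee (neg_nonpos.2 (Nat.cast_nonneg δ))
    have key : ∀ (f : EuclideanSpace ℝ (Fin δ) → ℝ), (∀ z, |f z| ≤ C) →
        |mconv δ f e μ x| ≤ M - 1 := by
      intro f hf
      refine (mconv_abs_le δ hf he0.le x).trans ?_
      have : e ^ (-(δ : ℝ)) * C * (μ Set.univ).toReal ≤
          (ε / 2) ^ (-(δ : ℝ)) * C * (μ Set.univ).toReal := by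
        gcongr
      simpa [hM] using this
    exact ⟨key g fun z => (hC z).1, key _ fun z => (hC z).2⟩
  set G : ℝ → EuclideanSpace ℝ (Fin δ) → ℝ := fun e x => (mconv δ g e μ x) ^ (q - 1) with hG
  set G' : ℝ → EuclideanSpace ℝ (Fin δ) → ℝ := fun e x =>
    (e⁻¹ * (mconv δ (negRad δ g) e μ x - δ * mconv δ g e μ x)) * (q - 1) *
      (mconv δ g e μ x) ^ (q - 1 - 1) with hG'
  have hGmeas : ∀ e, AEStronglyMeasurable (G e) μ := by
    intro e
    refine Continuous.aestronglyMeasurable ?_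
    exact (mconv_continuous δ hsm.continuous (fun z => (hC z).1) e).rpow_const
      fun x => Or.inr (by linarith)
  have hG'meas : AEStronglyMeasurable (G' ε) μ := by
    refine Continuous.aestronglyMeasurable ?_
    have h1 := mconv_continuous δ hsm.continuous (fun z => (hC z).1) (μ := μ) ε
    have h2 := mconv_continuous δ (negRad_continuous δ g hsm) (fun z => (hC z).2) (μ := μ) ε
    exact ((continuous_const.mul (h2.sub (continuous_const.mul h1))).mul continuous_const).mul
      (h1.rpow_const fun x => Or.inr (by linarith))
  have hGint : Integrable (G ε) μ := by
    refine integrable_bdd (hGmeas ε) (C := M ^ (q - 1)) fun x => ?_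
    have h1 := (hbd ε (by linarith) x).1
    have h2 := mconv_nonneg δ (μ := μ) hg hε.le x
    rw [abs_of_nonneg (Real.rpow_nonneg h2 _)]
    exact Real.rpow_le_rpow h2 (by linarith [abs_le.1 h1]) (by linarith)
  set B : ℝ := (ε / 2)⁻¹ * (M + δ * M) * (q - 1) * M ^ (q - 1 - 1) with hB
  have hbound : ∀ᵐ x ∂μ, ∀ e ∈ Metric.ball ε (ε / 2), ‖G' e x‖ ≤ B := by
    refine ae_of_all _ fun x e he => ?_
    obtain ⟨hee, he0⟩ := hball e he
    obtain ⟨b1, b2⟩ := hbd e hee x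
    have hφnn : 0 ≤ mconv δ g e μ x := mconv_nonneg δ (μ := μ) hg he0.le x
    have hφM : mconv δ g e μ x ≤ M := by linarith [abs_le.1 b1]
    have hψM : |mconv δ (negRad δ g) e μ x| ≤ M := by linarith [abs_le.1 b2, abs_nonneg (mconv δ (negRad δ g) e μ x)]
    rw [Real.norm_eq_abs, hG']
    simp only
    rw [abs_mul, abs_mul]
    have t1 : |e⁻¹ * (mconv δ (negRad δ g) e μ x - δ * mconv δ g e μ x)| ≤
        (ε / 2)⁻¹ * (M + δ * M) := by
      rw [abs_mul, abs_of_nonneg (inv_nonneg.2 he0.le)]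
      refine mul_le_mul (inv_anti₀ hε2 hee) ?_ (abs_nonneg _) (inv_nonneg.2 hε2.le)
      refine (abs_sub _ _).trans ?_
      have : |(δ:ℝ) * mconv δ g e μ x| ≤ (δ:ℝ) * M := by
        rw [abs_mul, abs_of_nonneg (Nat.cast_nonneg δ : (0:ℝ) ≤ δ), abs_of_nonneg hφnn]
        exact mul_le_mul_of_nonneg_left hφM (Nat.cast_nonneg δ)
      linarith [hψM]
    have t2 : |(mconv δ g e μ x) ^ (q - 1 - 1)| ≤ M ^ (q - 1 - 1) := by
      rw [abs_of_nonneg (Real.rpow_nonneg hφnn _)]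
      exact Real.rpow_le_rpow hφnn hφM (by linarith)
    have hq1 : |q - 1| = q - 1 := abs_of_nonneg (by linarith)
    rw [hq1, hB]
    have h0 : (0:ℝ) ≤ (ε / 2)⁻¹ * (M + δ * M) := by positivity
    refine mul_le_mul (mul_le_mul t1 le_rfl (by linarith) h0) t2 (abs_nonneg _) ?_
    exact mul_nonneg h0 (by linarith)
  have hdiff : ∀ᵐ x ∂μ, ∀ e ∈ Metric.ball ε (ε / 2), HasDerivAt (G · x) (G' e x) e := by
    refine ae_of_all _ fun x e he => ?_
    exact (mconv_hasDerivAt δ hsm hC μ (hball e he).2 x).rpow_const (Or.inr (by linarith))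
  have main := (hasDerivAt_integral_of_dominated_loc_of_deriv_le (Metric.ball_mem_nhds ε hε2)
    (Filter.Eventually.of_forall hGmeas) hGint hG'meas hbound (integrable_const B) hdiff).2
  -- now rewrite the derivative integral
  have hq2 : q - 1 - 1 = q - 2 := by ring
  have hptwise : ∀ x, G' ε x = (q - 1) * ε⁻¹ *
      ((mconv δ g ε μ x) ^ (q - 2) * mconv δ (negRad δ g) ε μ x -
        δ * (mconv δ g ε μ x) ^ (q - 1)) := by
    intro x
    rw [hG']
    simp only [hq2]
    rcases eq_or_lt_of_le (mconv_nonneg δ (μ := μ) hg hε.le x) with h | h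
    · rw [← h, Real.zero_rpow (by intro hc; rw [sub_eq_zero] at hc; linarith : q - 1 ≠ 0)]
      ring
    · have : (mconv δ g ε μ x) ^ (q - 1) = (mconv δ g ε μ x) ^ (q - 2) * mconv δ g ε μ x := by
        rw [show q - 1 = q - 2 + 1 from by ring, Real.rpow_add_one h.ne' (q - 2)]
      rw [this]
      ring
  have hint1 : Integrable (fun x => (mconv δ g ε μ x) ^ (q - 2) * mconv δ (negRad δ g) ε μ x) μ := by
    refine integrable_bdd ?_ (C := M ^ (q - 2) * M) fun x => ?_
    · refine Continuous.aestronglyMeasurable ?_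
      exact ((mconv_continuous δ hsm.continuous (fun z => (hC z).1) ε).rpow_const
        fun x => Or.inr (by linarith)).mul
        (mconv_continuous δ (negRad_continuous δ g hsm) (fun z => (hC z).2) ε)
    · obtain ⟨b1, b2⟩ := hbd ε (by linarith) x
      have hφnn := mconv_nonneg δ (μ := μ) hg hε.le x
      rw [abs_mul, abs_of_nonneg (Real.rpow_nonneg hφnn _)]
      refine mul_le_mul ?_ (by linarith [abs_le.1 b2, (abs_nonneg (mconv δ (negRad δ g) ε μ x))] : |mconv δ (negRad δ g) ε μ x| ≤ M) (abs_nonneg _) (Real.rpow_nonneg hMpos.le _)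
      exact Real.rpow_le_rpow hφnn (by linarith [abs_le.1 b1]) (by linarith)
  have key : (∫ x, G' ε x ∂μ) = (q - 1) * ε⁻¹ *
      ((∫ x, (mconv δ g ε μ x) ^ (q - 2) * mconv δ (negRad δ g) ε μ x ∂μ) -
        δ * ∫ x, (mconv δ g ε μ x) ^ (q - 1) ∂μ) := by
    rw [integral_congr_ae (ae_of_all _ hptwise)]
    rw [integral_const_mul ((q-1) * ε⁻¹)]
    rw [MeasureTheory.integral_sub hint1 (hGint.const_mul _)]
    rw [integral_const_mul ((δ:ℝ))]
  rw [key] at main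
  exact main

theorem taylorBound (δ : ℕ) {g : EuclideanSpace ℝ (Fin δ) → ℝ} (hsm : ContDiff ℝ (⊤ : ℕ∞) g)
    (hg : ∀ x, 0 ≤ g x) {C : ℝ} (hC1 : 1 ≤ C)
    (hC2 : ∀ x, ‖x‖ ^ 2 * ‖fderiv ℝ (fderiv ℝ g) x‖ ≤ C)
    {ε e : ℝ} (hε : 0 < ε) (hel : ε / 2 ≤ e) (her : e ≤ 2 * ε)
    (z : EuclideanSpace ℝ (Fin δ)) (hz : g (ε⁻¹ • z) = 0) :
    g (e⁻¹ • z) ≤ 16 * C / ε ^ 2 * (e - ε) ^ 2 := by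
  have hC0 : (0:ℝ) < C := lt_of_lt_of_le zero_lt_one hC1
  have he0 : 0 < e := lt_of_lt_of_le (half_pos hε) hel
  set f : ℝ → ℝ := fun t => g (t • z) with hf
  set D : ℝ → ℝ := fun t => (fderiv ℝ g (t • z)) z with hD
  set D' : ℝ → ℝ := fun t => (fderiv ℝ (fderiv ℝ g) (t • z) z) z with hD'
  have hline : ∀ t : ℝ, HasDerivAt (fun t : ℝ => t • z) z t := fun t => by
    simpa using (hasDerivAt_id t).smul_const z
  have hfd : ∀ t, HasDerivAt f (D t) t := fun t =>
    ((hsm.differentiable (by simp) _).hasFDerivAt).comp_hasDerivAt t (hline t)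
  have hsm' : ContDiff ℝ (⊤ : ℕ∞) (fderiv ℝ g) := hsm.fderiv_right (by simp)
  have hDd : ∀ t, HasDerivAt D (D' t) t := by
    intro t
    have h1 : HasDerivAt (fun t : ℝ => fderiv ℝ g (t • z)) (fderiv ℝ (fderiv ℝ g) (t • z) z) t :=
      ((hsm'.differentiable (by simp) _).hasFDerivAt).comp_hasDerivAt t (hline t)
    have h2 := h1.clm_apply (hasDerivAt_const t z)
    simpa using h2
  -- the interval
  set a : ℝ := min e⁻¹ ε⁻¹ with ha
  set b : ℝ := max e⁻¹ ε⁻¹ with hb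
  have hmem_e : e⁻¹ ∈ Set.Icc a b := ⟨min_le_left _ _, le_max_left _ _⟩
  have hmem_ε : ε⁻¹ ∈ Set.Icc a b := ⟨min_le_right _ _, le_max_right _ _⟩
  have hlow : ∀ t ∈ Set.Icc a b, (2 * ε)⁻¹ ≤ t := by
    intro t ht
    refine le_trans (le_min ?_ ?_) ht.1
    · exact inv_anti₀ he0 her
    · refine inv_anti₀ hε (by linarith)
  have htpos : ∀ t ∈ Set.Icc a b, 0 < t := fun t ht =>
    lt_of_lt_of_le (inv_pos.2 (by linarith)) (hlow t ht)
  -- bound on D'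
  have hD'bd : ∀ t ∈ Set.Icc a b, ‖D' t‖ ≤ 4 * C * ε ^ 2 := by
    intro t ht
    have ht0 := htpos t ht
    have h1 : ‖D' t‖ ≤ ‖fderiv ℝ (fderiv ℝ g) (t • z)‖ * ‖z‖ * ‖z‖ := by
      calc ‖(fderiv ℝ (fderiv ℝ g) (t • z) z) z‖
          ≤ ‖fderiv ℝ (fderiv ℝ g) (t • z) z‖ * ‖z‖ := ContinuousLinearMap.le_opNorm _ z
        _ ≤ ‖fderiv ℝ (fderiv ℝ g) (t • z)‖ * ‖z‖ * ‖z‖ := by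
            gcongr
            exact ContinuousLinearMap.le_opNorm _ z
    have h2 := hC2 (t • z)
    rw [norm_smul, Real.norm_eq_abs, abs_of_pos ht0, mul_pow] at h2
    -- h2 : t^2 * ‖z‖^2 * ‖D²g‖ ≤ C
    have h3 : ‖fderiv ℝ (fderiv ℝ g) (t • z)‖ * ‖z‖ * ‖z‖ ≤ C / t ^ 2 := by
      rw [le_div_iff₀ (by positivity)]
      nlinarith [norm_nonneg (fderiv ℝ (fderiv ℝ g) (t • z)), norm_nonneg z]
    refine h1.trans (h3.trans ?_)
    have h4 : (2 * ε)⁻¹ ≤ t := hlow t ht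
    have h5 : (2 * ε)⁻¹ ^ 2 ≤ t ^ 2 := pow_le_pow_left₀ (by positivity) h4 2
    rw [div_le_iff₀ (by positivity)]
    have h6 : 4 * C * ε ^ 2 * (2 * ε)⁻¹ ^ 2 = C := by field_simp; ring
    have h7 := mul_le_mul_of_nonneg_left h5 (by positivity : (0:ℝ) ≤ 4 * C * ε ^ 2)
    rw [h6] at h7
    linarith
  -- MVT for D
  have hDmvt : ∀ t ∈ Set.Icc a b, ‖D t‖ ≤ 4 * C * ε ^ 2 * (b - a) := by
    intro t ht
    have hDz : D ε⁻¹ = 0 := by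
      have hmin : IsLocalMin g (ε⁻¹ • z) :=
        Filter.Eventually.of_forall fun x => by rw [hz]; exact hg x
      rw [hD]
      simp only [hmin.fderiv_eq_zero]
      rfl
    have := Convex.norm_image_sub_le_of_norm_hasDerivWithin_le
      (f := D) (f' := D') (s := Set.Icc a b) (C := 4 * C * ε ^ 2)
      (fun u hu => (hDd u).hasDerivWithinAt) hD'bd (convex_Icc a b) hmem_ε ht
    rw [hDz, sub_zero] at this
    refine this.trans ?_
    have : ‖t - ε⁻¹‖ ≤ b - a := by
      rw [Real.norm_eq_abs, abs_sub_le_iff]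
      constructor <;> [linarith [ht.2, hmem_ε.1]; linarith [ht.1, hmem_ε.2]]
    exact mul_le_mul_of_nonneg_left this (by positivity)
  -- MVT for f
  have hfmvt := Convex.norm_image_sub_le_of_norm_hasDerivWithin_le
    (f := f) (f' := D) (s := Set.Icc a b) (C := 4 * C * ε ^ 2 * (b - a))
    (fun u hu => (hfd u).hasDerivWithinAt) hDmvt (convex_Icc a b) hmem_ε hmem_e
  have hfε : f ε⁻¹ = 0 := hz
  rw [hfε, sub_zero] at hfmvt
  -- collect
  have hba : b - a = |e⁻¹ - ε⁻¹| := by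
    rcases le_total e⁻¹ ε⁻¹ with h | h
    · rw [hb, ha, max_eq_right h, min_eq_left h, abs_of_nonpos (by linarith)]; ring
    · rw [hb, ha, max_eq_left h, min_eq_right h, abs_of_nonneg (by linarith)]
  have hinvdiff : |e⁻¹ - ε⁻¹| ≤ 2 * |e - ε| / ε ^ 2 := by
    rw [inv_sub_inv he0.ne' hε.ne']
    rw [abs_div, abs_mul]
    rw [div_le_div_iff₀ (by positivity) (by positivity)]
    rw [abs_of_pos he0, abs_of_pos hε]
    have h1 : ε * ε ≤ 2 * (e * ε) := by nlinarith
    calc |ε - e| * ε ^ 2 = |e - ε| * (ε * ε) := by rw [abs_sub_comm]; ring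
      _ ≤ |e - ε| * (2 * (e * ε)) := by gcongr
      _ = 2 * |e - ε| * (e * ε) := by ring
  have hnorm : ‖e⁻¹ - ε⁻¹‖ = |e⁻¹ - ε⁻¹| := rfl
  have hgle : g (e⁻¹ • z) ≤ ‖f e⁻¹‖ := le_abs_self _
  refine hgle.trans (hfmvt.trans ?_)
  rw [hnorm, hba]
  have habs : (0:ℝ) ≤ |e⁻¹ - ε⁻¹| := abs_nonneg _
  calc 4 * C * ε ^ 2 * |e⁻¹ - ε⁻¹| * |e⁻¹ - ε⁻¹|
      ≤ 4 * C * ε ^ 2 * (2 * |e - ε| / ε ^ 2) * (2 * |e - ε| / ε ^ 2) := by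
        gcongr <;> positivity
    _ = 16 * C / ε ^ 2 * (e - ε) ^ 2 := by
        rw [← sq_abs (e - ε)]
        set u := |e - ε| with hu
        field_simp
        ring

theorem degenerate (δ : ℕ) {q : ℝ} (hq : 2 < q) {g : EuclideanSpace ℝ (Fin δ) → ℝ}
    (hsm : ContDiff ℝ (⊤ : ℕ∞) g)
    (hdecay : ∀ k n : ℕ, ∃ C, ∀ x, ‖x‖ ^ k * ‖iteratedFDeriv ℝ n g x‖ ≤ C)
    (hg : ∀ x, 0 ≤ g x) (hh : ∀ x, 0 ≤ negRad δ g x)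
    (μ : Measure (EuclideanSpace ℝ (Fin δ))) [IsFiniteMeasure μ]
    {ε : ℝ} (hε : 0 < ε) (hI0 : (∫ x, (mconv δ g ε μ x) ^ (q - 1) ∂μ) = 0) :
    HasDerivAt (fun e => (∫ x, (mconv δ g e μ x) ^ (q - 1) ∂μ) ^ (1 / (q - 1))) 0 ε := by
  obtain ⟨C, hC1, hCall⟩ := bounds δ g hdecay
  have hC0 : (0:ℝ) < C := lt_of_lt_of_le zero_lt_one hC1
  have hq1' : (0:ℝ) < q - 1 := by linarith
  have hq1 : q - 1 ≠ 0 := hq1'.ne'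
  have hgb : ∀ z, |g z| ≤ C := fun z => (hCall z).1
  -- integrability of the q-1 powers
  have hinte : ∀ e : ℝ, 0 < e → Integrable (fun x => (mconv δ g e μ x) ^ (q - 1)) μ := by
    intro e he0
    refine integrable_bdd (((mconv_continuous δ hsm.continuous hgb e).rpow_const
      (fun x => Or.inr (by linarith))).aestronglyMeasurable)
      (C := (e ^ (-(δ:ℝ)) * C * (μ Set.univ).toReal) ^ (q - 1)) fun x => ?_
    have h1 := mconv_abs_le δ hgb (μ := μ) he0.le x
    have h2 := mconv_nonneg δ (μ := μ) hg he0.le x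
    rw [abs_of_nonneg (Real.rpow_nonneg h2 _)]
    exact Real.rpow_le_rpow h2 (le_trans (le_abs_self _) h1) (by linarith)
  -- a.e. vanishing at scale ε
  have hzero : ∀ᵐ x ∂μ, mconv δ g ε μ x = 0 := by
    have h := (integral_eq_zero_iff_of_nonneg
      (fun x => Real.rpow_nonneg (mconv_nonneg δ (μ := μ) hg hε.le x) _) (hinte ε hε)).1 hI0
    filter_upwards [h] with x hx
    exact (Real.rpow_eq_zero (mconv_nonneg δ (μ := μ) hg hε.le x) hq1).1 hx
  have hgz : ∀ᵐ x ∂μ, ∀ᵐ y ∂μ, g (ε⁻¹ • (x - y)) = 0 := by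
    filter_upwards [hzero] with x hx
    have hnn : 0 ≤ fun y => ε ^ (-(δ:ℝ)) * g (ε⁻¹ • (x - y)) :=
      fun y => mul_nonneg (Real.rpow_nonneg hε.le _) (hg _)
    have hintk : Integrable (fun y => ε ^ (-(δ:ℝ)) * g (ε⁻¹ • (x - y))) μ := by
      refine integrable_bdd (kernel_cont δ hsm.continuous _ x ε).aestronglyMeasurable
        (C := ε ^ (-(δ:ℝ)) * C) fun y => ?_
      rw [abs_mul, abs_of_nonneg (Real.rpow_nonneg hε.le _)]
      exact mul_le_mul_of_nonneg_left (hgb _) (Real.rpow_nonneg hε.le _)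
    have h2 := (integral_eq_zero_iff_of_nonneg hnn hintk).1 hx
    filter_upwards [h2] with y hy
    rcases mul_eq_zero.1 hy with h | h
    · exact absurd h (Real.rpow_pos_of_pos hε _).ne'
    · exact h
  -- the quadratic bound on the norm
  set K : ℝ := 16 * C / ε ^ 2 with hK
  set c4 : ℝ := (ε/2) ^ (-(δ:ℝ)) * K * (μ Set.univ).toReal with hc4
  set c5 : ℝ := c4 * ((μ Set.univ).toReal) ^ (1/(q-1)) with hc5
  have hKnn : 0 ≤ K := by positivity
  have hc4nn : 0 ≤ c4 := by positivity
  have hFbound : ∀ e ∈ Set.Icc (ε/2) (3*ε/2),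
      (∫ x, (mconv δ g e μ x) ^ (q - 1) ∂μ) ^ (1/(q-1)) ≤ c5 * (e - ε)^2 := by
    intro e he
    have hel : ε/2 ≤ e := he.1
    have her : e ≤ 2*ε := by linarith [he.2]
    have he0 : 0 < e := lt_of_lt_of_le (half_pos hε) hel
    have hbnn : (0:ℝ) ≤ c4 * (e - ε)^2 := by positivity
    have hφb : ∀ᵐ x ∂μ, mconv δ g e μ x ≤ c4 * (e - ε)^2 := by
      filter_upwards [hgz] with x hx
      have hb1 : |mconv δ g e μ x| ≤ (e ^ (-(δ:ℝ)) * (K * (e - ε)^2)) * (μ Set.univ).toReal := by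
        rw [← Real.norm_eq_abs]
        refine norm_integral_le_of_norm_le_const ?_
        filter_upwards [hx] with y hy
        rw [Real.norm_eq_abs, abs_mul, abs_of_nonneg (Real.rpow_nonneg he0.le _),
          abs_of_nonneg (hg _)]
        refine mul_le_mul_of_nonneg_left ?_ (Real.rpow_nonneg he0.le _)
        exact taylorBound δ hsm hg hC1 (fun z => (hCall z).2.2.2) hε hel her (x - y) hy
      have h2 : e ^ (-(δ:ℝ)) ≤ (ε/2) ^ (-(δ:ℝ)) :=
        Real.rpow_le_rpow_of_nonpos (half_pos hε) hel (neg_nonpos.2 (Nat.cast_nonneg δ))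
      calc mconv δ g e μ x ≤ |mconv δ g e μ x| := le_abs_self _
        _ ≤ (e ^ (-(δ:ℝ)) * (K * (e - ε)^2)) * (μ Set.univ).toReal := hb1
        _ ≤ ((ε/2) ^ (-(δ:ℝ)) * (K * (e - ε)^2)) * (μ Set.univ).toReal := by
            gcongr
        _ = c4 * (e - ε)^2 := by rw [hc4]; ring
    have hIb : (∫ x, (mconv δ g e μ x) ^ (q - 1) ∂μ) ≤
        (c4 * (e - ε)^2) ^ (q - 1) * (μ Set.univ).toReal := by
      have h3 : ∀ᵐ x ∂μ, (mconv δ g e μ x) ^ (q - 1) ≤ (c4 * (e - ε)^2) ^ (q - 1) := by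
        filter_upwards [hφb] with x hx
        exact Real.rpow_le_rpow (mconv_nonneg δ (μ := μ) hg he0.le x) hx hq1'.le
      have h4 := integral_mono_ae (hinte e he0) (integrable_const _) h3
      rwa [integral_const, smul_eq_mul, mul_comm] at h4
    have hInn : 0 ≤ ∫ x, (mconv δ g e μ x) ^ (q - 1) ∂μ :=
      integral_nonneg fun x => Real.rpow_nonneg (mconv_nonneg δ (μ := μ) hg he0.le x) _
    calc (∫ x, (mconv δ g e μ x) ^ (q - 1) ∂μ) ^ (1/(q-1))
        ≤ ((c4 * (e - ε)^2) ^ (q - 1) * (μ Set.univ).toReal) ^ (1/(q-1)) :=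
          Real.rpow_le_rpow hInn hIb (by positivity)
      _ = (c4 * (e - ε)^2) * ((μ Set.univ).toReal) ^ (1/(q-1)) := by
          rw [Real.mul_rpow (Real.rpow_nonneg hbnn _) ENNReal.toReal_nonneg,
            ← Real.rpow_mul hbnn, mul_one_div_cancel hq1, Real.rpow_one]
      _ = c5 * (e - ε)^2 := by rw [hc5]; ring
  -- little-o argument
  rw [hasDerivAt_iff_isLittleO]
  have hz0 : (∫ x, (mconv δ g ε μ x) ^ (q - 1) ∂μ) ^ (1/(q-1)) = 0 := by
    rw [hI0, Real.zero_rpow (one_div_ne_zero hq1)]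
  simp only [hz0, smul_zero, sub_zero]
  have h1 : Filter.Tendsto (fun e : ℝ => e - ε) (𝓝 ε) (𝓝 0) := by
    exact tendsto_sub_nhds_zero_iff.2 tendsto_id
  have hsq : (fun e : ℝ => (e - ε)^2) =o[𝓝 ε] fun e : ℝ => e - ε := by
    have h2 := (Asymptotics.isLittleO_one_iff ℝ).2 h1
    have h3 := h2.mul_isBigO (Asymptotics.isBigO_refl (fun e : ℝ => e - ε) (𝓝 ε))
    simpa only [one_mul, ← sq] using h3
  have hO : (fun e : ℝ => (∫ x, (mconv δ g e μ x) ^ (q - 1) ∂μ) ^ (1/(q-1))) =O[𝓝 ε]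
      fun e : ℝ => (e - ε)^2 := by
    refine Asymptotics.IsBigO.of_bound c5 ?_
    have hmem : Set.Icc (ε/2) (3*ε/2) ∈ 𝓝 ε := Icc_mem_nhds (by linarith) (by linarith)
    filter_upwards [hmem] with e he
    have he0 : 0 < e := lt_of_lt_of_le (half_pos hε) he.1
    have hInn : 0 ≤ ∫ x, (mconv δ g e μ x) ^ (q - 1) ∂μ :=
      integral_nonneg fun x => Real.rpow_nonneg (mconv_nonneg δ (μ := μ) hg he0.le x) _
    rw [Real.norm_eq_abs, Real.norm_eq_abs, abs_of_nonneg (Real.rpow_nonneg hInn _),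
      abs_of_nonneg (sq_nonneg (e - ε))]
    exact hFbound e he
  exact hO.trans_isLittleO hsq

theorem alg (d A I₀ ε q : ℝ) (hIpos : 0 < I₀) (hε : 0 < ε) (hq2 : 2 < q) :
    (q-1) * ε⁻¹ * (A - d * I₀) * (1/(q-1)) * I₀ ^ (1/(q-1) - 1)
      = A / (ε * (I₀ ^ (1/(q-1))) ^ (q-2)) - d * I₀ ^ (1/(q-1)) / ε := by
  have hq1 : q - 1 ≠ 0 := sub_ne_zero.2 (by intro h; rw [h] at hq2; linarith)
  set r : ℝ := 1/(q-1) with hr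
  have h1 : (I₀ ^ r) ^ (q-2) = I₀ ^ (r*(q-2)) := (Real.rpow_mul hIpos.le _ _).symm
  have hb : I₀ ^ (r-1) * I₀ ^ (r*(q-2)) = 1 := by
    rw [← Real.rpow_add hIpos, show r - 1 + r * (q-2) = 0 by rw [hr]; field_simp; ring,
      Real.rpow_zero]
  have hc : I₀ ^ (r-1) * I₀ = I₀ ^ r := by
    rw [← Real.rpow_add_one hIpos.ne' (r-1)]; ring_nf
  have hr1 : (q-1) * r = 1 := by rw [hr]; field_simp
  rw [h1, ← hc, div_eq_mul_inv A, mul_inv,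
    show (I₀ ^ (r*(q-2)))⁻¹ = I₀ ^ (r-1) from (eq_inv_of_mul_eq_one_left hb).symm,
    div_eq_mul_inv (d * (I₀ ^ (r-1) * I₀)) ε]
  linear_combination ε⁻¹ * (A - d * I₀) * I₀ ^ (r-1) * hr1

theorem stmt13 (δ : ℕ) (q : ℝ) (hq : 2 ≤ q) (g : EuclideanSpace ℝ (Fin δ) → ℝ)
    (hsm : ContDiff ℝ (⊤ : ℕ∞) g)
    (hdecay : ∀ k n : ℕ, ∃ C, ∀ x, ‖x‖ ^ k * ‖iteratedFDeriv ℝ n g x‖ ≤ C)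
    (hg : ∀ x, 0 ≤ g x) (hh : ∀ x, 0 ≤ negRad δ g x)
    (μ : Measure (EuclideanSpace ℝ (Fin δ))) [IsFiniteMeasure μ]
    (ε : ℝ) (hε : 0 < ε) :
    HasDerivAt (fun e => lqNormMu δ μ (q - 1) (mconv δ g e μ))
      ((∫ x, (mconv δ g ε μ x) ^ (q - 2) * mconv δ (negRad δ g) ε μ x ∂μ) /
          (ε * (lqNormMu δ μ (q - 1) (mconv δ g ε μ)) ^ (q - 2)) -
        δ * lqNormMu δ μ (q - 1) (mconv δ g ε μ) / ε) ε := by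
  obtain ⟨C, hC1, hCall⟩ := bounds δ g hdecay
  have hC : ∀ x, |g x| ≤ C ∧ |negRad δ g x| ≤ C := fun x => ⟨(hCall x).1, (hCall x).2.1⟩
  have hI := I_hasDerivAt δ hq hsm hC1 hC hg μ (ε := ε) hε
  have hlq : ∀ e, lqNormMu δ μ (q - 1) (mconv δ g e μ) =
      (∫ x, (mconv δ g e μ x) ^ (q - 1) ∂μ) ^ (1 / (q - 1)) := fun e => rfl
  rcases eq_or_lt_of_le hq with hq2 | hq2
  · -- q = 2
    subst hq2
    have e1 : (2:ℝ) - 1 = 1 := by norm_num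
    have e2 : (2:ℝ) - 2 = 0 := by norm_num
    simp only [hlq]
    have hfun : (fun e : ℝ => (∫ x, mconv δ g e μ x ^ ((2:ℝ) - 1) ∂μ) ^ (1/((2:ℝ)-1))) =
        fun e : ℝ => ∫ x, mconv δ g e μ x ∂μ := by
      funext e; simp [e1, Real.rpow_one]
    have hfun2 : (fun e : ℝ => ∫ x, mconv δ g e μ x ^ ((2:ℝ) - 1) ∂μ) =
        fun e : ℝ => ∫ x, mconv δ g e μ x ∂μ := by
      funext e; simp [e1, Real.rpow_one]
    rw [hfun]
    rw [hfun2] at hI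
    refine hI.congr_deriv ?_
    simp only [e1, e2, Real.rpow_zero, Real.rpow_one, one_div_one, one_mul, mul_one]
    field_simp
  · -- q > 2
    have hq1 : q - 1 ≠ 0 := sub_ne_zero.2 (by intro h; rw [h] at hq2; linarith)
    by_cases hI0 : (∫ x, (mconv δ g ε μ x) ^ (q - 1) ∂μ) = 0
    · have hmain := degenerate δ hq2 hsm hdecay hg hh μ hε hI0
      simp only [hlq]
      refine hmain.congr_deriv ?_
      rw [hI0, Real.zero_rpow (one_div_ne_zero hq1),
        Real.zero_rpow (sub_ne_zero.2 (by intro h; rw [h] at hq2; linarith : q ≠ 2))]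
      simp
    · have hInn : 0 ≤ ∫ x, (mconv δ g ε μ x) ^ (q - 1) ∂μ := integral_nonneg fun x =>
        Real.rpow_nonneg (mconv_nonneg δ (μ := μ) hg hε.le x) _
      have hIpos : 0 < ∫ x, (mconv δ g ε μ x) ^ (q - 1) ∂μ := lt_of_le_of_ne hInn (Ne.symm hI0)
      have main := hI.rpow_const (p := 1 / (q - 1)) (Or.inl hI0)
      simp only [hlq]
      refine main.congr_deriv ?_
      exact alg (δ : ℝ) _ _ ε q hIpos hε hq2
end
end

section
/- Assume g : ℝ^δ → [0,∞) is rapidly decreasing and 1 < q < ∞. For any finite compactly supported Borel measure μ on ℝ^δ, the map ε ↦ ∫_{ℝ^δ} (g_ε*μ)^{q−1} dμ is continuous on (0,∞). -/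
open MeasureTheory Filter Real

noncomputable section

theorem stmt16 (δ : ℕ) (q : ℝ) (hq : 1 < q) (g : EuclideanSpace ℝ (Fin δ) → ℝ)
    (hsm : ContDiff ℝ (⊤ : ℕ∞) g)
    (hdecay : ∀ k n : ℕ, ∃ C, ∀ x, ‖x‖ ^ k * ‖iteratedFDeriv ℝ n g x‖ ≤ C)
    (hg : ∀ x, 0 ≤ g x)
    (μ : Measure (EuclideanSpace ℝ (Fin δ))) [IsFiniteMeasure μ]
    (hcs : ∃ K : Set (EuclideanSpace ℝ (Fin δ)), IsCompact K ∧ μ Kᶜ = 0) :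
    ContinuousOn (fun ε : ℝ => ∫ x, (mconv δ g ε μ x) ^ (q - 1) ∂μ) (Set.Ioi 0) := by
  clear hcs
  obtain ⟨C, hC⟩ := hdecay 0 0
  simp only [pow_zero, one_mul, norm_iteratedFDeriv_zero] at hC
  have hC' : ∀ x, g x ≤ C := fun x => (le_abs_self _).trans (by simpa [Real.norm_eq_abs] using hC x)
  have hC0 : 0 ≤ C := le_trans (hg 0) (hC' 0)
  have hgc : Continuous g := hsm.continuous
  -- continuity of mconv in x, for fixed ε > 0
  have hmc : ∀ ε : ℝ, 0 < ε → Continuous (mconv δ g ε μ) := by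
    intro ε hε
    apply continuous_of_dominated (bound := fun _ => ε ^ (-(δ : ℝ)) * C)
    · intro x
      exact (show Continuous fun y => ε ^ (-(δ : ℝ)) * g (ε⁻¹ • (x - y)) by
        fun_prop).aestronglyMeasurable
    · intro x
      filter_upwards with y
      rw [Real.norm_eq_abs, abs_mul, abs_of_nonneg (Real.rpow_nonneg hε.le _),
        abs_of_nonneg (hg _)]
      exact mul_le_mul_of_nonneg_left (hC' _) (Real.rpow_nonneg hε.le _)
    · exact integrable_const _
    · filter_upwards with y
      fun_prop
  -- nonnegativity of mconv
  have hmnn : ∀ ε : ℝ, 0 < ε → ∀ x, 0 ≤ mconv δ g ε μ x := fun ε hε x =>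
    integral_nonneg fun y => mul_nonneg (Real.rpow_nonneg hε.le _) (hg _)
  intro ε₀ hε₀
  simp only [Set.mem_Ioi] at hε₀
  apply ContinuousAt.continuousWithinAt
  set M : ℝ := (ε₀ / 2) ^ (-(δ : ℝ)) * C with hM
  have hM0 : 0 ≤ M := mul_nonneg (Real.rpow_nonneg (by linarith) _) hC0
  have hIoo : Set.Ioo (ε₀ / 2) (2 * ε₀) ∈ nhds ε₀ := Ioo_mem_nhds (by linarith) (by linarith)
  -- bound for the kernel for ε in the window
  have hker : ∀ ε ∈ Set.Ioo (ε₀ / 2) (2 * ε₀), ∀ z, ε ^ (-(δ : ℝ)) * g z ≤ M := by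
    intro ε hε z
    have h1 : ε ^ (-(δ : ℝ)) ≤ (ε₀ / 2) ^ (-(δ : ℝ)) :=
      Real.rpow_le_rpow_of_nonpos (by linarith [hε.1]) hε.1.le (neg_nonpos.mpr (Nat.cast_nonneg δ))
    calc ε ^ (-(δ : ℝ)) * g z ≤ ε ^ (-(δ : ℝ)) * C :=
          mul_le_mul_of_nonneg_left (hC' z) (Real.rpow_nonneg (by linarith [hε.1]) _)
      _ ≤ M := mul_le_mul_of_nonneg_right h1 hC0
  have hεpos : ∀ ε ∈ Set.Ioo (ε₀ / 2) (2 * ε₀), 0 < ε := fun ε hε => by linarith [hε.1]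
  -- bound for mconv for ε in the window
  have hmb : ∀ ε ∈ Set.Ioo (ε₀ / 2) (2 * ε₀), ∀ x,
      mconv δ g ε μ x ≤ M * (μ Set.univ).toReal := by
    intro ε hε x
    have := norm_integral_le_of_norm_le_const (μ := μ) (C := M)
      (f := fun y => ε ^ (-(δ : ℝ)) * g (ε⁻¹ • (x - y))) ?_
    · exact (le_abs_self _).trans (by rw [← Real.norm_eq_abs]; exact this)
    · filter_upwards with y
      rw [Real.norm_eq_abs, abs_of_nonneg (mul_nonneg (Real.rpow_nonneg (hεpos ε hε).le _) (hg _))]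
      exact hker ε hε _
  -- continuity of mconv in ε, for fixed x
  have hmce : ∀ x, ContinuousAt (fun ε => mconv δ g ε μ x) ε₀ := by
    intro x
    apply continuousAt_of_dominated (bound := fun _ => M)
    · filter_upwards with ε
      exact (show Continuous fun y => ε ^ (-(δ : ℝ)) * g (ε⁻¹ • (x - y)) by
        fun_prop).aestronglyMeasurable
    · filter_upwards [hIoo] with ε hε
      filter_upwards with y
      rw [Real.norm_eq_abs, abs_of_nonneg (mul_nonneg (Real.rpow_nonneg (hεpos ε hε).le _) (hg _))]
      exact hker ε hε _
    · exact integrable_const _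
    · filter_upwards with y
      have h1 : ContinuousAt (fun ε : ℝ => ε ^ (-(δ : ℝ))) ε₀ :=
        Real.continuousAt_rpow_const ε₀ _ (Or.inl hε₀.ne')
      have h2 : ContinuousAt (fun ε : ℝ => g (ε⁻¹ • (x - y))) ε₀ :=
        hgc.continuousAt.comp (((continuousAt_inv₀ hε₀.ne').smul continuousAt_const))
      exact h1.mul h2
  apply continuousAt_of_dominated (bound := fun _ => (M * (μ Set.univ).toReal) ^ (q - 1))
  · filter_upwards [hIoo] with ε hε
    exact (((hmc ε (hεpos ε hε)).rpow_const (fun x => Or.inr (by linarith)))).aestronglyMeasurable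
  · filter_upwards [hIoo] with ε hε
    filter_upwards with x
    rw [Real.norm_eq_abs, abs_of_nonneg (Real.rpow_nonneg (hmnn ε (hεpos ε hε) x) _)]
    exact Real.rpow_le_rpow (hmnn ε (hεpos ε hε) x) (hmb ε hε x) (by linarith)
  · exact integrable_const _
  · filter_upwards with x
    exact (hmce x).rpow_const (Or.inr (by linarith))
end
end

section
/- Assume g : ℝ^δ → [0,∞) is rapidly decreasing and 0 < q < ∞, q ≠ 1. For any finite compactly supported Borel measure μ on ℝ^δ, the map ε ↦ ∑_{j∈ℤ^δ} (∫_{ℝ^δ} g(j − y/ε) dμ(y))^q is continuous on (0,∞). -/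
open MeasureTheory Filter Real

noncomputable section

private lemma summable_w : Summable (fun n : ℤ => ((1 + |(n : ℝ)|)⁻¹) ^ 2) := by
  have hN : Summable (fun n : ℕ => ((1 + (n : ℝ))⁻¹) ^ 2) := by
    have h := Real.summable_nat_pow_inv.mpr (by norm_num : 1 < 2)
    have h2 := (summable_nat_add_iff 1).mpr h
    refine h2.congr fun n => ?_
    push_cast
    rw [inv_pow]
    ring_nf
  refine Summable.of_nat_of_neg ?_ ?_ <;>
  · refine hN.congr fun n => ?_
    have : |((n : ℤ) : ℝ)| = (n : ℝ) := by
      push_cast; exact abs_of_nonneg (by positivity)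
    push_cast
    simp [abs_of_nonneg (show (0:ℝ) ≤ (n:ℝ) by positivity)]

private def piSplit (n : ℕ) : (Fin (n + 1) → ℤ) ≃ ℤ × (Fin n → ℤ) where
  toFun j := (j 0, fun i => j i.succ)
  invFun p := Fin.cons p.1 p.2
  left_inv j := Fin.cons_self_tail j
  right_inv p := by simp

set_option maxHeartbeats 1000000 in
private lemma summable_pi_prod {w : ℤ → ℝ} (hw : Summable w) (h0 : ∀ n, 0 ≤ w n) :
    ∀ δ : ℕ, Summable (fun j : Fin δ → ℤ => ∏ i, w (j i)) := by
  intro δ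
  induction δ with
  | zero => exact Summable.of_finite
  | succ n ih =>
      have h : Summable (fun p : ℤ × (Fin n → ℤ) => w p.1 * ∏ i, w (p.2 i)) :=
        Summable.mul_of_nonneg (f := w) (g := fun j : Fin n → ℤ => ∏ i, w (j i))
          hw ih (fun x => h0 x) (fun j => Finset.prod_nonneg fun i _ => h0 _)
      refine ((piSplit n).symm.summable_iff
        (f := fun j : Fin (n+1) → ℤ => ∏ i, w (j i))).mp (h.congr fun p => ?_)
      show w p.1 * ∏ i, w (p.2 i) = ∏ i, w ((Fin.cons p.1 p.2 : Fin (n+1) → ℤ) i)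
      rw [Fin.prod_univ_succ]
      simp

private lemma abs_apply_le_norm {δ : ℕ} (x : EuclideanSpace ℝ (Fin δ)) (i : Fin δ) :
    |x i| ≤ ‖x‖ := by
  have h1 : ‖x i‖ ^ 2 ≤ ∑ i' : Fin δ, ‖x i'‖ ^ 2 :=
    Finset.single_le_sum (f := fun i' => ‖x i'‖ ^ 2)
      (fun i' _ => sq_nonneg _) (Finset.mem_univ i)
  have h2 : |x i| = Real.sqrt (‖x i‖ ^ 2) := by
    rw [Real.norm_eq_abs, Real.sqrt_sq_eq_abs, abs_abs]
  rw [EuclideanSpace.norm_eq, h2]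
  exact Real.sqrt_le_sqrt h1

private lemma pow_one_add_le {t : ℝ} (ht : 0 ≤ t) (k : ℕ) :
    (1 + t) ^ k ≤ 2 ^ k * (1 + t ^ k) := by
  have h1 : (1 + t) ^ k ≤ (2 * max 1 t) ^ k := by
    refine pow_le_pow_left₀ (by positivity) ?_ k
    rcases le_total t 1 with h | h
    · calc 1 + t ≤ 2 := by linarith
        _ ≤ 2 * max 1 t := by nlinarith [le_max_left 1 t]
    · calc 1 + t ≤ t + t := by linarith
        _ = 2 * t := by ring
        _ ≤ 2 * max 1 t := by nlinarith [le_max_right 1 t]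
  calc (1 + t) ^ k ≤ (2 * max 1 t) ^ k := h1
    _ = 2 ^ k * (max 1 t) ^ k := mul_pow 2 _ k
    _ ≤ 2 ^ k * (1 + t ^ k) := by
        refine mul_le_mul_of_nonneg_left ?_ (by positivity)
        rcases le_total t 1 with h | h
        · rw [max_eq_left h]; simp; positivity
        · rw [max_eq_right h]; nlinarith

/-- The lattice point `j ∈ ℤ^δ` viewed as a point of `ℝ^δ`. -/
def latPt (δ : ℕ) (j : Fin δ → ℤ) : EuclideanSpace ℝ (Fin δ) := WithLp.toLp 2 (fun i => (j i : ℝ))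

/-- The Gaussian-kernel Rényi entropy sum `∑_{j ∈ ℤ^δ} (∫ g(j - y/ε) dμ(y))^q`. -/
def kerSum (δ : ℕ) (g : EuclideanSpace ℝ (Fin δ) → ℝ) (ε : ℝ)
    (μ : Measure (EuclideanSpace ℝ (Fin δ))) (q : ℝ) : ℝ :=
  ∑' j : Fin δ → ℤ, (∫ y, g (latPt δ j - ε⁻¹ • y) ∂μ) ^ q

theorem stmt18 (δ : ℕ) (q : ℝ) (hq0 : 0 < q) (hq1 : q ≠ 1)
    (g : EuclideanSpace ℝ (Fin δ) → ℝ)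
    (hsm : ContDiff ℝ (⊤ : ℕ∞) g)
    (hdecay : ∀ k n : ℕ, ∃ C, ∀ x, ‖x‖ ^ k * ‖iteratedFDeriv ℝ n g x‖ ≤ C)
    (hg : ∀ x, 0 ≤ g x)
    (μ : Measure (EuclideanSpace ℝ (Fin δ))) [IsFiniteMeasure μ]
    (hcs : ∃ K : Set (EuclideanSpace ℝ (Fin δ)), IsCompact K ∧ μ Kᶜ = 0) :
    ContinuousOn (fun ε : ℝ => kerSum δ g ε μ q) (Set.Ioi 0) := by
  obtain ⟨K, hKcomp, hKc⟩ := hcs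
  obtain ⟨R₀, hR₀⟩ := hKcomp.isBounded.subset_closedBall 0
  set R := max R₀ 0 with hRdef
  have hR0 : 0 ≤ R := le_max_right _ _
  have hRK : K ⊆ Metric.closedBall 0 R :=
    hR₀.trans (Metric.closedBall_subset_closedBall (le_max_left _ _))
  obtain ⟨m, hm⟩ : ∃ m : ℕ, 2 ≤ (m : ℝ) * q := by
    obtain ⟨m, hm⟩ := exists_nat_gt (2 / q)
    exact ⟨m, le_of_lt ((div_lt_iff₀ hq0).mp hm)⟩
  set k := δ * m with hk
  obtain ⟨C₀, hC₀⟩ := hdecay 0 0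
  obtain ⟨Ck, hCk⟩ := hdecay k 0
  have hC₀' : ∀ x, g x ≤ C₀ := by
    intro x
    have := hC₀ x
    rwa [pow_zero, one_mul, norm_iteratedFDeriv_zero, Real.norm_eq_abs,
      abs_of_nonneg (hg x)] at this
  have hCk' : ∀ x, ‖x‖ ^ k * g x ≤ Ck := by
    intro x
    have := hCk x
    rwa [norm_iteratedFDeriv_zero, Real.norm_eq_abs, abs_of_nonneg (hg x)] at this
  set D := 2 ^ k * (C₀ + Ck) with hDdef
  have hD : ∀ x, g x * (1 + ‖x‖) ^ k ≤ D := by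
    intro x
    calc g x * (1 + ‖x‖) ^ k ≤ g x * (2 ^ k * (1 + ‖x‖ ^ k)) :=
          mul_le_mul_of_nonneg_left (pow_one_add_le (norm_nonneg x) k) (hg x)
      _ = 2 ^ k * (g x + ‖x‖ ^ k * g x) := by ring
      _ ≤ 2 ^ k * (C₀ + Ck) :=
          mul_le_mul_of_nonneg_left (add_le_add (hC₀' x) (hCk' x)) (by positivity)
  have hD0 : 0 ≤ D := by
    have h1 := hD 0
    have h0 : (0:ℝ) ≤ g 0 * (1 + ‖(0 : EuclideanSpace ℝ (Fin δ))‖) ^ k := by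
      have := hg 0
      positivity
    linarith
  set B : (Fin δ → ℤ) → ℝ := fun j => ∏ i, (1 + |(j i : ℝ)|) with hBdef
  have hB1 : ∀ j, 1 ≤ B j := by
    intro j
    rw [hBdef]
    show (1:ℝ) ≤ ∏ i, (1 + |(j i : ℝ)|)
    calc (1:ℝ) = ∏ _i : Fin δ, (1:ℝ) := by simp
      _ ≤ ∏ i, (1 + |(j i : ℝ)|) :=
          Finset.prod_le_prod (fun i _ => zero_le_one)
            (fun i _ => le_add_of_nonneg_right (abs_nonneg _))
  have hB0 : ∀ j, 0 < B j := fun j => lt_of_lt_of_le one_pos (hB1 j)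
  have hBk : ∀ j, B j ^ m ≤ (1 + ‖latPt δ j‖) ^ k := by
    intro j
    have h1 : ∀ i, 1 + |(j i : ℝ)| ≤ 1 + ‖latPt δ j‖ := by
      intro i
      have h2 : |(latPt δ j) i| ≤ ‖latPt δ j‖ := abs_apply_le_norm (latPt δ j) i
      have h3 : (latPt δ j) i = (j i : ℝ) := rfl
      rw [h3] at h2
      linarith
    calc B j ^ m = ∏ i, (1 + |(j i : ℝ)|) ^ m := by
          rw [hBdef]; exact (Finset.prod_pow _ _ _).symm
      _ ≤ ∏ _i : Fin δ, (1 + ‖latPt δ j‖) ^ m :=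
          Finset.prod_le_prod (fun i _ => by positivity)
            (fun i _ => pow_le_pow_left₀ (by positivity) (h1 i) m)
      _ = (1 + ‖latPt δ j‖) ^ k := by
          rw [Finset.prod_const, Finset.card_univ, Fintype.card_fin, ← pow_mul,
            mul_comm m δ]
  intro ε₀ hε₀
  rw [Set.mem_Ioi] at hε₀
  set a := ε₀ / 2 with hadef
  have ha : 0 < a := by positivity
  set M := (μ Set.univ).toReal with hM
  have hM0 : 0 ≤ M := ENNReal.toReal_nonneg
  set E := D * (1 + R / a) ^ k * M with hE
  have hRa : 0 ≤ R / a := div_nonneg hR0 ha.le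
  have hE0 : 0 ≤ E :=
    mul_nonneg (mul_nonneg hD0 (pow_nonneg (by linarith) k)) hM0
  have hae : ∀ᵐ y ∂μ, y ∈ K := by
    rw [MeasureTheory.ae_iff]
    exact hKc
  have hIle : ∀ j : Fin δ → ℤ, ∀ ε ∈ Set.Ioi a,
      |∫ y, g (latPt δ j - ε⁻¹ • y) ∂μ| ≤ E / B j ^ m := by
    intro j ε hε
    rw [Set.mem_Ioi] at hε
    have hεpos : 0 < ε := ha.trans hε
    have hbd : ∀ᵐ y ∂μ, ‖g (latPt δ j - ε⁻¹ • y)‖ ≤ D * (1 + R / a) ^ k / B j ^ m := by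
      filter_upwards [hae] with y hy
      rw [Real.norm_eq_abs, abs_of_nonneg (hg _)]
      set x := latPt δ j - ε⁻¹ • y with hx
      have hyR : ‖y‖ ≤ R := by
        have := hRK hy
        rwa [Metric.mem_closedBall, dist_zero_right] at this
      have hsc : ‖ε⁻¹ • y‖ ≤ R / a := by
        rw [norm_smul, norm_inv, Real.norm_eq_abs, abs_of_pos hεpos]
        calc ε⁻¹ * ‖y‖ ≤ a⁻¹ * R :=
              mul_le_mul (inv_anti₀ ha hε.le) hyR (norm_nonneg y) (by positivity)
          _ = R / a := by rw [div_eq_inv_mul]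
      have h1 : 1 + ‖latPt δ j‖ ≤ (1 + R / a) * (1 + ‖x‖) := by
        have h3 := norm_sub_norm_le (latPt δ j) (ε⁻¹ • y)
        nlinarith [norm_nonneg x]
      have h4 : B j ^ m ≤ (1 + R / a) ^ k * (1 + ‖x‖) ^ k := by
        refine (hBk j).trans ?_
        rw [← mul_pow]
        exact pow_le_pow_left₀ (by positivity) h1 k
      have h5 : g x * B j ^ m ≤ D * (1 + R / a) ^ k := by
        calc g x * B j ^ m ≤ g x * ((1 + R / a) ^ k * (1 + ‖x‖) ^ k) :=
              mul_le_mul_of_nonneg_left h4 (hg x)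
          _ = g x * (1 + ‖x‖) ^ k * (1 + R / a) ^ k := by ring
          _ ≤ D * (1 + R / a) ^ k :=
              mul_le_mul_of_nonneg_right (hD x) (by positivity)
      exact (le_div_iff₀ (pow_pos (hB0 j) m)).mpr h5
    have hnorm := MeasureTheory.norm_integral_le_of_norm_le_const hbd
    rw [Real.norm_eq_abs] at hnorm
    refine hnorm.trans (le_of_eq ?_)
    rw [hE, div_mul_eq_mul_div]
    rfl
  set u : (Fin δ → ℤ) → ℝ := fun j => E ^ q * ∏ i, ((1 + |(j i : ℝ)|)⁻¹) ^ 2 with hu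
  have husum : Summable u :=
    (summable_pi_prod summable_w (fun n => by positivity) δ).mul_left _
  have huval : ∀ j, u j = E ^ q / B j ^ 2 := by
    intro j
    rw [hu, hBdef]
    simp only [inv_pow]
    rw [div_eq_mul_inv, Finset.prod_inv_distrib, Finset.prod_pow]
  have hbound : ∀ j : Fin δ → ℤ, ∀ ε ∈ Set.Ioi a,
      ‖(∫ y, g (latPt δ j - ε⁻¹ • y) ∂μ) ^ q‖ ≤ u j := by
    intro j ε hε
    have hI0 : 0 ≤ ∫ y, g (latPt δ j - ε⁻¹ • y) ∂μ := integral_nonneg fun y => hg _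
    rw [Real.norm_eq_abs, abs_of_nonneg (Real.rpow_nonneg hI0 q)]
    have hle : (∫ y, g (latPt δ j - ε⁻¹ • y) ∂μ) ≤ E / B j ^ m :=
      (le_abs_self _).trans (hIle j ε hε)
    have h1 : (∫ y, g (latPt δ j - ε⁻¹ • y) ∂μ) ^ q ≤ (E / B j ^ m) ^ q :=
      Real.rpow_le_rpow hI0 hle hq0.le
    refine h1.trans ?_
    rw [Real.div_rpow hE0 (pow_nonneg (hB0 j).le m), huval j]
    have h2 : (B j : ℝ) ^ (2 : ℕ) ≤ ((B j ^ m : ℝ)) ^ q := by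
      have h3 : ((B j ^ m : ℝ)) ^ q = B j ^ ((m : ℝ) * q) := by
        rw [← Real.rpow_natCast (B j) m, ← Real.rpow_mul (hB0 j).le]
      rw [h3, ← Real.rpow_natCast (B j) 2]
      exact Real.rpow_le_rpow_of_exponent_le (hB1 j) (by push_cast; linarith)
    exact div_le_div_of_nonneg_left (Real.rpow_nonneg hE0 q) (pow_pos (hB0 j) 2) h2
  have hcont : ∀ j : Fin δ → ℤ, ContinuousOn
      (fun ε : ℝ => (∫ y, g (latPt δ j - ε⁻¹ • y) ∂μ) ^ q) (Set.Ioi a) := by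
    intro j
    refine ContinuousOn.rpow_const ?_ (fun ε _ => Or.inr hq0.le)
    intro ε hε
    rw [Set.mem_Ioi] at hε
    have hεpos : 0 < ε := ha.trans hε
    refine (MeasureTheory.continuousAt_of_dominated (bound := fun _ => C₀) ?_ ?_ ?_ ?_).continuousWithinAt
    · refine Eventually.of_forall fun ε' => ?_
      exact ((hsm.continuous.comp
        (continuous_const.sub (continuous_id.const_smul ε'⁻¹)))).aestronglyMeasurable
    · refine Eventually.of_forall fun ε' => Eventually.of_forall fun y => ?_
      rw [Real.norm_eq_abs, abs_of_nonneg (hg _)]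
      exact hC₀' _
    · exact integrable_const C₀
    · refine Eventually.of_forall fun y => ?_
      have hc : ContinuousAt (fun ε' : ℝ => latPt δ j - ε'⁻¹ • y) ε :=
        continuousAt_const.sub ((continuousAt_inv₀ hεpos.ne').smul continuousAt_const)
      exact (hsm.continuous.continuousAt).comp hc
  have hts : ContinuousOn
      (fun ε : ℝ => ∑' j : Fin δ → ℤ, (∫ y, g (latPt δ j - ε⁻¹ • y) ∂μ) ^ q)
      (Set.Ioi a) := continuousOn_tsum hcont husum hbound
  have hmem : Set.Ioi a ∈ nhds ε₀ := isOpen_Ioi.mem_nhds (by rw [Set.mem_Ioi, hadef]; linarith)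
  exact ((hts.continuousAt hmem).continuousWithinAt : _)
end
end
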